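/- arXiv:2506.09232 — 5 statements merged into one kernel-verified Lean document; each statement's English description precedes it below -/
import Mathlib

section
/- For every a ∈ gl_2(ℝ), the endomorphism φ(a) is a derivation of the Lie algebra heis_{2n−5} (i.e., φ(a)[v,w] = [φ(a)v, w] + [v, φ(a)w] for all v, w), and φ is a homomorphism of Lie algebras into the derivation algebra, i.e., φ([a,b]) = φ(a)∘φ(b) − φ(b)∘φ(a) for all a, b ∈ gl_2(ℝ). -/
noncomputable section

open scoped BigOperators

/-- The underlying vector space of `gl₂(ℝ)`, with basis `Y, H, E, X` at indices `0,1,2,3`. -/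
abbrev G2 : Type := Fin 4 → ℝ

/-- The underlying vector space of the Heisenberg algebra `heis_{2n-5}`:
coefficients of `ε_1, …, ε_{2n-6}` together with the coefficient of `η`. -/
abbrev Hs (n : ℕ) : Type := (Fin (2*n-6) → ℝ) × ℝ

/-- The Heisenberg bracket, encoding `[ε_i, ε_{2n-5-i}] = (-1)^i η` for `1 ≤ i ≤ 2n-6`
(all other brackets of basis elements vanish). -/
def heisBr (n : ℕ) (x y : Hs n) : Hs n :=
  (0, ∑ i : Fin (2*n-6), (-1 : ℝ)^(i.val+1) * x.1 i * y.1 i.rev)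

/-- The `gl₂(ℝ)` bracket: `[X,Y]=H`, `[H,X]=2X`, `[H,Y]=-2Y`, and `E` is central. -/
def gl2Br (a b : G2) : G2 :=
  ![-2*(a 1 * b 0 - a 0 * b 1), a 3 * b 0 - a 0 * b 3, 0, 2*(a 1 * b 3 - a 3 * b 1)]

/-- The linear map `φ : gl₂(ℝ) → End(heis_{2n-5})` determined by:
`φ(H)ε_i = (2i+5-2n)ε_i`, `φ(H)η = 0`; `φ(E)ε_i = ε_i`, `φ(E)η = 2η`;
`φ(X)ε_i = ε_{i+1}` (`i ≤ 2n-7`), `φ(X)ε_{2n-6} = 0`, `φ(X)η = 0`;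
`φ(Y)ε_1 = 0`, `φ(Y)ε_i = (i-1)(2n-5-i)ε_{i-1}` (`i ≥ 2`), `φ(Y)η = 0`. -/
def phi (n : ℕ) (a : G2) (v : Hs n) : Hs n :=
  (fun i =>
      a 1 * (2*(i.val:ℝ) + 7 - 2*(n:ℝ)) * v.1 i
    + a 2 * v.1 i
    + a 3 * (if h : 0 < i.val then v.1 ⟨i.val - 1, by have := i.isLt; omega⟩ else 0)
    + a 0 * (((i.val:ℝ)+1) * (2*(n:ℝ) - 7 - (i.val:ℝ))) *
        (if h : i.val + 1 < 2*n-6 then v.1 ⟨i.val+1, h⟩ else 0),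
   2 * a 2 * v.2)

/-- extension of the coefficient vector to all of ℤ, zero outside `[0, 2n-7]`. -/
def Wf (n : ℕ) (v : Hs n) : ℤ → ℝ :=
  Function.extend (fun i : Fin (2*n-6) => (i.val : ℤ)) v.1 0

lemma W_apply (n : ℕ) (v : Hs n) (i : Fin (2*n-6)) : Wf n v (i.val : ℤ) = v.1 i :=
  Function.Injective.extend_apply (fun i j h => Fin.ext (by exact_mod_cast h)) v.1 (0 : ℤ → ℝ) i

lemma W_zero (n : ℕ) (v : Hs n) (k : ℤ) (h : k < 0 ∨ ((2*n-6 : ℕ) : ℤ) ≤ k) :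
    Wf n v k = 0 := by
  rw [Wf, Function.extend_apply' _ _ _ (by rintro ⟨i, rfl⟩; have := i.isLt; omega)]
  rfl

lemma W_of_lt (n : ℕ) (v : Hs n) (k : ℤ) (h0 : 0 ≤ k) (h : k < ((2*n-6:ℕ) : ℤ)) :
    Wf n v k = v.1 ⟨k.toNat, by omega⟩ := by
  conv_lhs => rw [← Int.toNat_of_nonneg h0]
  exact W_apply n v ⟨k.toNat, by omega⟩

lemma phi_fst (n : ℕ) (a : G2) (v : Hs n) (i : Fin (2*n-6)) :
    (phi n a v).1 i =
      a 1 * (2*(i.val:ℝ) + 7 - 2*(n:ℝ)) * Wf n v (i.val : ℤ)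
    + a 2 * Wf n v (i.val : ℤ)
    + a 3 * Wf n v ((i.val : ℤ) - 1)
    + a 0 * (((i.val:ℝ)+1) * (2*(n:ℝ) - 7 - (i.val:ℝ))) * Wf n v ((i.val : ℤ) + 1) := by
  have hlt := i.isLt
  have h3 : (if h : 0 < i.val then v.1 ⟨i.val - 1, by omega⟩ else 0)
      = Wf n v ((i.val : ℤ) - 1) := by
    by_cases h : 0 < i.val
    · rw [dif_pos h, W_of_lt n v _ (by omega) (by omega)]
      exact congrArg v.1 (Fin.ext (by simp only [Fin.val_mk]; omega))
    · rw [dif_neg h, W_zero n v _ (Or.inl (by omega))]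
  have h4 : (if h : i.val + 1 < 2*n-6 then v.1 ⟨i.val+1, h⟩ else 0)
      = Wf n v ((i.val : ℤ) + 1) := by
    by_cases h : i.val + 1 < 2*n-6
    · rw [dif_pos h, W_of_lt n v _ (by omega) (by omega)]
      exact congrArg v.1 (Fin.ext (by simp only [Fin.val_mk]; omega))
    · rw [dif_neg h, W_zero n v _ (Or.inr (by omega))]
  simp only [phi, W_apply, h3, h4]

lemma phi_snd (n : ℕ) (a : G2) (v : Hs n) : (phi n a v).2 = 2 * a 2 * v.2 := rfl

lemma W_phi (n : ℕ) (a : G2) (v : Hs n) (k : ℤ) (hk : k < ((2*n-6:ℕ) : ℤ)) :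
    Wf n (phi n a v) k =
      a 1 * (2*(k:ℝ) + 7 - 2*(n:ℝ)) * Wf n v k
    + a 2 * Wf n v k
    + a 3 * Wf n v (k - 1)
    + a 0 * (((k:ℝ)+1) * (2*(n:ℝ) - 7 - (k:ℝ))) * Wf n v (k + 1) := by
  by_cases h0 : 0 ≤ k
  · rw [W_of_lt n _ k h0 hk, phi_fst]
    simp only [Fin.val_mk]
    rw [show ((k.toNat : ℕ) : ℝ) = (k : ℝ) from by
      rw [← Int.cast_natCast, Int.toNat_of_nonneg h0]]
    rw [Int.toNat_of_nonneg h0]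
  · have hneg : k < 0 := by omega
    rw [W_zero n _ k (Or.inl hneg), W_zero n v k (Or.inl hneg),
      W_zero n v (k-1) (Or.inl (by omega))]
    by_cases h1 : k = -1
    · subst h1
      norm_num
    · rw [W_zero n v (k+1) (Or.inl (by omega))]
      ring

lemma sum_shift (m : ℕ) (G : ℕ → ℝ) :
    ∑ i ∈ Finset.range m, G i = (∑ i ∈ Finset.range m, G (i+1)) + G 0 - G m := by
  have h1 := Finset.sum_range_succ G m
  have h2 := Finset.sum_range_succ' G m
  linarith

lemma fin_sum_to_range (m : ℕ) (f : Fin m → ℝ) (g : ℕ → ℝ)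
    (h : ∀ i : Fin m, f i = g i.val) :
    ∑ i : Fin m, f i = ∑ j ∈ Finset.range m, g j := by
  rw [Finset.sum_congr rfl (fun i _ => h i), Fin.sum_univ_eq_sum_range]

def A1t (n : ℕ) (a : G2) (v w : Hs n) (j : ℕ) : ℝ :=
  (-1:ℝ)^(j+1) * (a 1 * (2*(j:ℝ) + 7 - 2*(n:ℝ))) * Wf n v (j:ℤ) * Wf n w (2*(n:ℤ)-7-(j:ℤ))

def Tt (n : ℕ) (v w : Hs n) (j : ℕ) : ℝ :=
  (-1:ℝ)^(j+1) * Wf n v (j:ℤ) * Wf n w (2*(n:ℤ)-7-(j:ℤ))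

def Pt (n : ℕ) (a : G2) (v w : Hs n) (j : ℕ) : ℝ :=
  (-1:ℝ)^(j+1) * a 3 * Wf n v ((j:ℤ)-1) * Wf n w (2*(n:ℤ)-7-(j:ℤ))

def Qt (n : ℕ) (a : G2) (v w : Hs n) (j : ℕ) : ℝ :=
  (-1:ℝ)^(j+1) * a 3 * Wf n v (j:ℤ) * Wf n w (2*(n:ℤ)-8-(j:ℤ))

def Rt (n : ℕ) (a : G2) (v w : Hs n) (j : ℕ) : ℝ :=
  (-1:ℝ)^(j+1) * (a 0 * (((j:ℝ)+1) * (2*(n:ℝ)-7-(j:ℝ)))) * Wf n v ((j:ℤ)+1)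
    * Wf n w (2*(n:ℤ)-7-(j:ℤ))

def St (n : ℕ) (a : G2) (v w : Hs n) (j : ℕ) : ℝ :=
  (-1:ℝ)^(j+1) * (a 0 * ((j:ℝ) * (2*(n:ℝ)-6-(j:ℝ)))) * Wf n v (j:ℤ)
    * Wf n w (2*(n:ℤ)-6-(j:ℤ))

def Gt (n : ℕ) (a : G2) (v w : Hs n) (j : ℕ) : ℝ :=
  (-1:ℝ)^j * (a 0 * ((j:ℝ) * (2*(n:ℝ)-6-(j:ℝ)))) * Wf n v (j:ℤ)
    * Wf n w (2*(n:ℤ)-6-(j:ℤ))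

lemma hPQ (n : ℕ) (hn : 6 ≤ n) (a : G2) (v w : Hs n) :
    (∑ j ∈ Finset.range (2*n-6), Pt n a v w j)
      + (∑ j ∈ Finset.range (2*n-6), Qt n a v w j) = 0 := by
  have h0 : Pt n a v w 0 = 0 := by
    simp only [Pt]
    rw [W_zero n v _ (Or.inl (by norm_num))]
    ring
  have hm : Pt n a v w (2*n-6) = 0 := by
    simp only [Pt]
    rw [W_zero n w _ (Or.inl (by omega))]
    ring
  have hsh : ∀ j : ℕ, Pt n a v w (j+1) = - Qt n a v w j := by
    intro j
    simp only [Pt, Qt]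
    push_cast
    rw [show ((j:ℤ)+1)-1 = (j:ℤ) from by ring,
      show 2*(n:ℤ)-7-((j:ℤ)+1) = 2*(n:ℤ)-8-(j:ℤ) from by ring]
    ring
  have hc : ∑ j ∈ Finset.range (2*n-6), Pt n a v w (j+1)
      = ∑ j ∈ Finset.range (2*n-6), - Qt n a v w j :=
    Finset.sum_congr rfl (fun j _ => hsh j)
  rw [sum_shift (2*n-6) (Pt n a v w), hc, Finset.sum_neg_distrib, h0, hm]
  ring

lemma hRS (n : ℕ) (hn : 6 ≤ n) (a : G2) (v w : Hs n) :
    (∑ j ∈ Finset.range (2*n-6), Rt n a v w j)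
      + (∑ j ∈ Finset.range (2*n-6), St n a v w j) = 0 := by
  have h0 : Gt n a v w 0 = 0 := by
    simp only [Gt]
    norm_num
  have hm : Gt n a v w (2*n-6) = 0 := by
    simp only [Gt]
    rw [show ((2*n-6:ℕ):ℝ) = 2*(n:ℝ)-6 from by
      rw [Nat.cast_sub (show 6 ≤ 2*n by omega)]; push_cast; ring]
    ring
  have hsh : ∀ j : ℕ, Rt n a v w j = Gt n a v w (j+1) := by
    intro j
    simp only [Rt, Gt]
    push_cast
    rw [show 2*(n:ℤ)-6-((j:ℤ)+1) = 2*(n:ℤ)-7-(j:ℤ) from by ring]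
    ring
  have hS : ∀ j : ℕ, St n a v w j = - Gt n a v w j := by
    intro j
    simp only [St, Gt]
    ring
  have hc1 : ∑ j ∈ Finset.range (2*n-6), Rt n a v w j
      = ∑ j ∈ Finset.range (2*n-6), Gt n a v w (j+1) :=
    Finset.sum_congr rfl (fun j _ => hsh j)
  have hc2 : ∑ j ∈ Finset.range (2*n-6), St n a v w j
      = ∑ j ∈ Finset.range (2*n-6), - Gt n a v w j :=
    Finset.sum_congr rfl (fun j _ => hS j)
  have := sum_shift (2*n-6) (Gt n a v w)
  rw [hc1, hc2, Finset.sum_neg_distrib]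
  rw [h0, hm] at this
  linarith

lemma key_sum (n : ℕ) (hn : 6 ≤ n) (a : G2) (v w : Hs n) :
    (heisBr n (phi n a v) w).2 + (heisBr n v (phi n a w)).2
      = 2 * a 2 * (heisBr n v w).2 := by
  have hrev : ∀ i : Fin (2*n-6), ((i.rev.val : ℕ) : ℤ) = 2*(n:ℤ) - 7 - (i.val : ℤ) := by
    intro i
    have h1 := i.isLt
    have h2 := Fin.val_rev i
    omega
  have hrevR : ∀ i : Fin (2*n-6), ((i.rev.val : ℕ) : ℝ) = 2*(n:ℝ) - 7 - (i.val : ℝ) := by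
    intro i
    have := hrev i
    exact_mod_cast congrArg (fun z : ℤ => (z : ℝ)) this
  simp only [heisBr]
  rw [fin_sum_to_range _ _
      (fun j => A1t n a v w j + a 2 * Tt n v w j + Pt n a v w j + Rt n a v w j)
      (fun i => by
        rw [phi_fst, ← W_apply n w i.rev, hrev i]
        simp only [A1t, Tt, Pt, Rt]
        ring)]
  rw [fin_sum_to_range _ _
      (fun j => - A1t n a v w j + a 2 * Tt n v w j + Qt n a v w j + St n a v w j)
      (fun i => by
        rw [phi_fst, ← W_apply n v i, hrev i, hrevR i,
          show 2*(n:ℤ) - 7 - (i.val:ℤ) - 1 = 2*(n:ℤ) - 8 - (i.val:ℤ) from by ring,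
          show 2*(n:ℤ) - 7 - (i.val:ℤ) + 1 = 2*(n:ℤ) - 6 - (i.val:ℤ) from by ring]
        simp only [A1t, Tt, Qt, St]
        ring)]
  rw [fin_sum_to_range _ _ (fun j => Tt n v w j)
      (fun i => by
        rw [← W_apply n v i, ← W_apply n w i.rev, hrev i]
        simp only [Tt])]
  simp only [Finset.sum_add_distrib, Finset.sum_neg_distrib, ← Finset.mul_sum]
  have h1 := hPQ n hn a v w
  have h2 := hRS n hn a v w
  linarith

lemma part2 (n : ℕ) (hn : 6 ≤ n) (a b : G2) (v : Hs n) :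
    phi n (gl2Br a b) v = phi n a (phi n b v) - phi n b (phi n a v) := by
  have hg0 : gl2Br a b 0 = -2*(a 1 * b 0 - a 0 * b 1) := rfl
  have hg1 : gl2Br a b 1 = a 3 * b 0 - a 0 * b 3 := rfl
  have hg2 : gl2Br a b 2 = 0 := rfl
  have hg3 : gl2Br a b 3 = 2*(a 1 * b 3 - a 3 * b 1) := rfl
  have hsnd : (phi n (gl2Br a b) v).2 = (phi n a (phi n b v) - phi n b (phi n a v)).2 := by
    simp only [Prod.snd_sub, phi_snd, hg2]
    ring
  have hfst : (phi n (gl2Br a b) v).1 = (phi n a (phi n b v) - phi n b (phi n a v)).1 := by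
    funext i
    have hk : ((i.val : ℕ) : ℤ) < ((2*n-6:ℕ) : ℤ) := by exact_mod_cast i.isLt
    simp only [Prod.fst_sub, Pi.sub_apply]
    rw [phi_fst, phi_fst, phi_fst, hg0, hg1, hg2, hg3,
      W_phi n b v (i.val : ℤ) hk, W_phi n a v (i.val : ℤ) hk,
      W_phi n b v ((i.val : ℤ) - 1) (by omega), W_phi n a v ((i.val : ℤ) - 1) (by omega)]
    simp only [show ∀ z : ℤ, z - 1 + 1 = z from fun z => by ring,
      show ∀ z : ℤ, z + 1 - 1 = z from fun z => by ring]
    by_cases hc : (i.val : ℤ) + 1 < ((2*n-6:ℕ) : ℤ)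
    · rw [W_phi n b v ((i.val : ℤ) + 1) hc, W_phi n a v ((i.val : ℤ) + 1) hc]
      simp only [show ∀ z : ℤ, z - 1 + 1 = z from fun z => by ring,
        show ∀ z : ℤ, z + 1 - 1 = z from fun z => by ring]
      push_cast
      ring
    · have hb1 : i.val = 2*n-7 := by have := i.isLt; omega
      have hbR : ((i.val : ℕ) : ℝ) = 2*(n:ℝ) - 7 := by
        rw [hb1, Nat.cast_sub (show 7 ≤ 2*n by omega)]
        push_cast
        ring
      rw [W_zero n v ((i.val:ℤ)+1) (Or.inr (by omega)),
        W_zero n (phi n b v) ((i.val:ℤ)+1) (Or.inr (by omega)),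
        W_zero n (phi n a v) ((i.val:ℤ)+1) (Or.inr (by omega))]
      push_cast
      rw [hbR]
      ring
  exact Prod.ext hfst hsnd

lemma part1 (n : ℕ) (hn : 6 ≤ n) (a : G2) (v w : Hs n) :
    phi n a (heisBr n v w) = heisBr n (phi n a v) w + heisBr n v (phi n a w) := by
  have hfst : (phi n a (heisBr n v w)).1
      = (heisBr n (phi n a v) w + heisBr n v (phi n a w)).1 := by
    funext i
    simp [phi, heisBr]
  have hsnd : (phi n a (heisBr n v w)).2
      = (heisBr n (phi n a v) w + heisBr n v (phi n a w)).2 := by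
    rw [Prod.snd_add, phi_snd, key_sum n hn a v w]
  exact Prod.ext hfst hsnd


/-- every `φ(a)` is a derivation of `heis_{2n-5}`, and `φ` is a Lie algebra
homomorphism of `gl₂(ℝ)` into the derivation algebra of `heis_{2n-5}`. -/
theorem phi_derivation_and_hom (n : ℕ) (hn : 6 ≤ n) :
    (∀ (a : G2) (v w : Hs n),
      phi n a (heisBr n v w) = heisBr n (phi n a v) w + heisBr n v (phi n a w)) ∧
    (∀ (a b : G2) (v : Hs n),
      phi n (gl2Br a b) v = phi n a (phi n b v) - phi n b (phi n a v)) := by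
  exact ⟨fun a v w => part1 n hn a v w, fun a b v => part2 n hn a b v⟩
end
end

section
/- The alternating form ω is nondegenerate on 𝓔, and for every a ∈ sl_2(ℝ) = span{Y, H, X} and all x, y ∈ 𝓔 one has ω(φ(a)x, y) + ω(x, φ(a)y) = 0; that is, the restriction φ(a)|_𝓔 belongs to the symplectic algebra sp(𝓔, ω). -/
noncomputable section

open scoped BigOperators

/-- The subspace `𝓔 = span{ε_1, …, ε_{2n-6}}` of `heis_{2n-5}`, as a type. -/
abbrev EV (n : ℕ) : Type := Fin (2*n-6) → ℝ

/-- The alternating form `ω` on `𝓔` determined by `ω(ε_i, ε_{2n-5-i}) = (-1)^i`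
and `ω(ε_i, ε_j) = 0` when `i + j ≠ 2n-5`; equivalently `[x,y] = ω(x,y)·η`. -/
def omegaF (n : ℕ) (x y : EV n) : ℝ :=
  ∑ i : Fin (2*n-6), (-1 : ℝ)^(i.val+1) * x i * y i.rev

/-- The restriction of `φ(a)` to the subspace `𝓔 = span{ε_1, …, ε_{2n-6}}`. -/
def phiE (n : ℕ) (a : G2) (x : EV n) : EV n := (phi n a (x, 0)).1

def eExt (n : ℕ) (x : EV n) (i : ℕ) : ℝ :=
  if h : 1 ≤ i ∧ i ≤ 2*n-6 then x ⟨i-1, by omega⟩ else 0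

lemma eExt_eq (n : ℕ) (x : EV n) (i : ℕ) (h1 : 1 ≤ i) (h2 : i ≤ 2*n-6) :
    eExt n x i = x ⟨i-1, by omega⟩ := dif_pos ⟨h1, h2⟩

lemma omega_eq (n : ℕ) (x y : EV n) :
    omegaF n x y = ∑ i ∈ Finset.range (2*n-6),
      (-1:ℝ)^(i+1) * eExt n x (i+1) * eExt n y (2*n-6-i) := by
  rw [omegaF, ← Fin.sum_univ_eq_sum_range
    (fun i => (-1:ℝ)^(i+1) * eExt n x (i+1) * eExt n y (2*n-6-i))]
  refine Finset.sum_congr rfl fun i _ => ?_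
  have hi := i.isLt
  rw [eExt_eq n x (i.val+1) (by omega) (by omega),
      eExt_eq n y (2*n-6-i.val) (by omega) (by omega)]
  have e1 : x ⟨i.val+1-1, by omega⟩ = x i := congrArg x (Fin.ext (show i.val+1-1 = i.val by omega))
  have e2 : y ⟨2*n-6-i.val-1, by omega⟩ = y i.rev :=
    congrArg y (Fin.ext (show 2*n-6-i.val-1 = i.rev.val by rw [Fin.val_rev]; omega))
  rw [e1, e2]

lemma phi_left (n : ℕ) (hn : 6 ≤ n) (a : G2) (ha : a 2 = 0) (x y : EV n) :
    omegaF n (phiE n a x) y = ∑ i ∈ Finset.range (2*n-6),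
      (-1:ℝ)^(i+1) *
        (a 1 * (2*(i:ℝ)+7-2*(n:ℝ)) * eExt n x (i+1) + a 3 * eExt n x i
          + a 0 * ((i:ℝ)+1) * (2*(n:ℝ)-7-(i:ℝ)) * eExt n x (i+2)) * eExt n y (2*n-6-i) := by
  rw [omega_eq]
  refine Finset.sum_congr rfl fun i hi => ?_
  rw [Finset.mem_range] at hi
  have key : eExt n (phiE n a x) (i+1)
      = a 1 * (2*(i:ℝ)+7-2*(n:ℝ)) * eExt n x (i+1) + a 3 * eExt n x i
          + a 0 * ((i:ℝ)+1) * (2*(n:ℝ)-7-(i:ℝ)) * eExt n x (i+2) := by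
    have hx1 : eExt n x (i+1) = x ⟨i, by omega⟩ := by
      rw [eExt_eq n x (i+1) (by omega) (by omega)]
      exact congrArg x (Fin.ext (show i+1-1 = i by omega))
    rw [eExt_eq n _ (i+1) (by omega) (by omega)]
    show a 1 * (2*(i:ℝ)+7-2*(n:ℝ)) * x ⟨i, by omega⟩ + a 2 * x ⟨i, by omega⟩
        + a 3 * (if h : 0 < i then x ⟨i-1, by omega⟩ else 0)
        + a 0 * (((i:ℝ)+1)*(2*(n:ℝ)-7-(i:ℝ)))
          * (if h : i+1 < 2*n-6 then x ⟨i+1, by omega⟩ else 0) = _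
    rw [ha, hx1]
    by_cases h0 : 0 < i
    · rw [dif_pos h0, eExt_eq n x i (by omega) (by omega)]
      by_cases h1 : i + 1 < 2*n-6
      · rw [dif_pos h1, eExt_eq n x (i+2) (by omega) (by omega)]
        have e1 : x ⟨i+2-1, by omega⟩ = x ⟨i+1, by omega⟩ :=
          congrArg x (Fin.ext (show i+2-1 = i+1 by omega))
        rw [e1]; ring
      · rw [dif_neg h1]
        have hx2 : eExt n x (i+2) = 0 := by rw [eExt, dif_neg (by omega)]
        rw [hx2]; ring
    · rw [dif_neg h0]
      have hx0 : eExt n x i = 0 := by rw [eExt, dif_neg (by omega)]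
      rw [hx0]
      by_cases h1 : i + 1 < 2*n-6
      · rw [dif_pos h1, eExt_eq n x (i+2) (by omega) (by omega)]
        have e1 : x ⟨i+2-1, by omega⟩ = x ⟨i+1, by omega⟩ :=
          congrArg x (Fin.ext (show i+2-1 = i+1 by omega))
        rw [e1]; ring
      · rw [dif_neg h1]
        have hx2 : eExt n x (i+2) = 0 := by rw [eExt, dif_neg (by omega)]
        rw [hx2]; ring
  rw [key]

lemma phi_right (n : ℕ) (hn : 6 ≤ n) (a : G2) (ha : a 2 = 0) (x y : EV n) :
    omegaF n x (phiE n a y) = ∑ i ∈ Finset.range (2*n-6),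
      (-1:ℝ)^(i+1) * eExt n x (i+1) *
        (a 1 * (2*(n:ℝ)-7-2*(i:ℝ)) * eExt n y (2*n-6-i)
          + a 3 * eExt n y (2*n-6-(i+1))
          + a 0 * (2*(n:ℝ)-6-(i:ℝ)) * (i:ℝ) * eExt n y (2*n-6+1-i)) := by
  rw [omega_eq]
  refine Finset.sum_congr rfl fun i hi => ?_
  rw [Finset.mem_range] at hi
  have key : eExt n (phiE n a y) (2*n-6-i)
      = a 1 * (2*(n:ℝ)-7-2*(i:ℝ)) * eExt n y (2*n-6-i)
          + a 3 * eExt n y (2*n-6-(i+1))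
          + a 0 * (2*(n:ℝ)-6-(i:ℝ)) * (i:ℝ) * eExt n y (2*n-6+1-i) := by
    have hcast : ((2*n-6-i-1 : ℕ) : ℝ) = 2*(n:ℝ)-7-(i:ℝ) := by
      have h7 : (2*n-6-i-1 : ℕ) = 2*n-7-i := by omega
      rw [h7, Nat.cast_sub (by omega), Nat.cast_sub (by omega)]
      push_cast; ring
    have hy1 : eExt n y (2*n-6-i) = y ⟨2*n-6-i-1, by omega⟩ :=
      eExt_eq n y (2*n-6-i) (by omega) (by omega)
    rw [eExt_eq n _ (2*n-6-i) (by omega) (by omega), hy1]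
    show a 1 * (2*((2*n-6-i-1 : ℕ):ℝ)+7-2*(n:ℝ)) * y ⟨2*n-6-i-1, by omega⟩
        + a 2 * y ⟨2*n-6-i-1, by omega⟩
        + a 3 * (if h : 0 < 2*n-6-i-1 then y ⟨2*n-6-i-1-1, by omega⟩ else 0)
        + a 0 * ((((2*n-6-i-1 : ℕ):ℝ)+1)*(2*(n:ℝ)-7-((2*n-6-i-1 : ℕ):ℝ)))
          * (if h : (2*n-6-i-1)+1 < 2*n-6 then y ⟨(2*n-6-i-1)+1, by omega⟩ else 0) = _
    rw [ha, hcast]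
    by_cases h0 : 0 < 2*n-6-i-1
    · rw [dif_pos h0, ← hy1]
      have hy0 : eExt n y (2*n-6-(i+1)) = y ⟨2*n-6-i-1-1, by omega⟩ := by
        rw [eExt_eq n y (2*n-6-(i+1)) (by omega) (by omega)]
        exact congrArg y (Fin.ext (show 2*n-6-(i+1)-1 = 2*n-6-i-1-1 by omega))
      rw [hy0]
      by_cases h1 : (2*n-6-i-1)+1 < 2*n-6
      · rw [dif_pos h1]
        have hy2 : eExt n y (2*n-6+1-i) = y ⟨(2*n-6-i-1)+1, by omega⟩ := by
          rw [eExt_eq n y (2*n-6+1-i) (by omega) (by omega)]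
          exact congrArg y (Fin.ext (show 2*n-6+1-i-1 = (2*n-6-i-1)+1 by omega))
        rw [hy2]; ring
      · rw [dif_neg h1]
        have hy2 : eExt n y (2*n-6+1-i) = 0 := by rw [eExt, dif_neg (by omega)]
        rw [hy2]
        have hiz : (i:ℝ) = 0 := by norm_cast; omega
        rw [hiz]; ring
    · rw [dif_neg h0, ← hy1]
      have hy0 : eExt n y (2*n-6-(i+1)) = 0 := by rw [eExt, dif_neg (by omega)]
      rw [hy0]
      by_cases h1 : (2*n-6-i-1)+1 < 2*n-6
      · rw [dif_pos h1]
        have hy2 : eExt n y (2*n-6+1-i) = y ⟨(2*n-6-i-1)+1, by omega⟩ := by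
          rw [eExt_eq n y (2*n-6+1-i) (by omega) (by omega)]
          exact congrArg y (Fin.ext (show 2*n-6+1-i-1 = (2*n-6-i-1)+1 by omega))
        rw [hy2]; ring
      · rw [dif_neg h1]
        have hy2 : eExt n y (2*n-6+1-i) = 0 := by rw [eExt, dif_neg (by omega)]
        rw [hy2]
        have hiz : (i:ℝ) = 0 := by norm_cast; omega
        rw [hiz]; ring
  rw [key]

/-- `ω` is nondegenerate on `𝓔`, and for every `a ∈ sl₂(ℝ) = span{Y,H,X}`
(i.e. `a` with vanishing `E`-component) the operator `φ(a)|_𝓔` is an infinitesimal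
symplectic transformation: `ω(φ(a)x, y) + ω(x, φ(a)y) = 0`. -/
theorem omega_nondegenerate_and_sl2_symplectic (n : ℕ) (hn : 6 ≤ n) :
    (∀ x : EV n, (∀ y : EV n, omegaF n x y = 0) → x = 0) ∧
    (∀ a : G2, a 2 = 0 →
      ∀ x y : EV n, omegaF n (phiE n a x) y + omegaF n x (phiE n a y) = 0) := by
  constructor
  · intro x hx
    funext j
    have h := hx (fun k => if k = j.rev then (1:ℝ) else 0)
    simp only [omegaF] at h
    have h2 : ∀ i : Fin (2*n-6),
        (-1:ℝ)^(i.val+1) * x i * (if i.rev = j.rev then (1:ℝ) else 0)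
          = if i = j then (-1:ℝ)^(i.val+1) * x i else 0 := by
      intro i
      by_cases hij : i = j
      · subst hij; simp
      · rw [if_neg hij, if_neg (fun hr => hij (Fin.rev_inj.mp hr)), mul_zero]
    rw [Finset.sum_congr rfl (fun i _ => h2 i),
        Finset.sum_ite_eq' Finset.univ j (fun i => (-1:ℝ)^(i.val+1) * x i),
        if_pos (Finset.mem_univ j)] at h
    have hpow : (-1:ℝ)^(j.val+1) ≠ 0 := pow_ne_zero _ (by norm_num)
    simp only [Pi.zero_apply]
    rcases mul_eq_zero.mp h with h' | h'
    · exact absurd h' hpow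
    · exact h'
  · intro a ha x y
    rw [phi_left n hn a ha x y, phi_right n hn a ha x y, ← Finset.sum_add_distrib]
    set F : ℕ → ℝ := fun j => a 3 * (-1:ℝ)^j * eExt n x j * eExt n y (2*n-6-j)
      + a 0 * (-1:ℝ)^j * (j:ℝ) * (2*(n:ℝ)-6-(j:ℝ)) * eExt n x (j+1) * eExt n y (2*n-6+1-j)
      with hF
    have h1 : ∀ i ∈ Finset.range (2*n-6),
        (-1:ℝ)^(i+1) * (a 1 * (2*(i:ℝ)+7-2*(n:ℝ)) * eExt n x (i+1) + a 3 * eExt n x i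
            + a 0 * ((i:ℝ)+1) * (2*(n:ℝ)-7-(i:ℝ)) * eExt n x (i+2)) * eExt n y (2*n-6-i)
        + (-1:ℝ)^(i+1) * eExt n x (i+1) *
            (a 1 * (2*(n:ℝ)-7-2*(i:ℝ)) * eExt n y (2*n-6-i)
              + a 3 * eExt n y (2*n-6-(i+1))
              + a 0 * (2*(n:ℝ)-6-(i:ℝ)) * (i:ℝ) * eExt n y (2*n-6+1-i))
        = F (i+1) - F i := by
      intro i hi
      rw [Finset.mem_range] at hi
      rw [hF]
      simp only []
      have e1 : 2*n-6+1-(i+1) = 2*n-6-i := by omega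
      rw [e1]
      push_cast
      ring
    rw [Finset.sum_congr rfl h1, Finset.sum_range_sub]
    have hy0 : eExt n y (2*n-6-(2*n-6)) = 0 := by rw [eExt, dif_neg (by omega)]
    have hx0 : eExt n x (2*n-6+1) = 0 := by rw [eExt, dif_neg (by omega)]
    have hx00 : eExt n x 0 = 0 := by rw [eExt, dif_neg (by omega)]
    rw [hF]
    simp only []
    rw [hy0, hx0, hx00]
    ring
end
end

section
/- For every integer k with 0 ≤ k ≤ n−4, the negative part m = s^{k,n} of g is fundamental: m is generated as a Lie algebra by its weight −1 component m_{−1} = span{X, ε_{n−3−k}}. -/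
noncomputable section

open scoped BigOperators

/-- The underlying vector space of `g = gl₂(ℝ) ⋉ heis_{2n-5}`. -/
abbrev Gg (n : ℕ) : Type := G2 × Hs n

/-- The basis vector `ε_p` (1-based index `p`). -/
def epsV (n : ℕ) (p : ℕ) : Hs n := (fun i => if i.val + 1 = p then 1 else 0, 0)

/-- The central basis vector `η`. -/
def etaV (n : ℕ) : Hs n := (0, 1)

/-- The bracket of the semidirect product `g = gl₂(ℝ) ⋉_φ heis_{2n-5}`. -/
def gBr (n : ℕ) (x y : Gg n) : Gg n :=
  (gl2Br x.1 y.1, phi n x.1 y.2 - phi n y.1 x.2 + heisBr n x.2 y.2)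

def bY (n : ℕ) : Gg n := (![1,0,0,0], 0)
def bH (n : ℕ) : Gg n := (![0,1,0,0], 0)
def bE (n : ℕ) : Gg n := (![0,0,1,0], 0)
def bX (n : ℕ) : Gg n := (![0,0,0,1], 0)
def bEps (n : ℕ) (p : ℕ) : Gg n := (0, epsV n p)
def bEta (n : ℕ) : Gg n := (0, etaV n)

/-- The weight-`w` graded component of `g` in the grading of `s^{k,n}`: the span of the
basis elements of weight `w`, where `wght Y = 1`, `wght H = wght E = 0`, `wght X = -1`,
`wght ε_p = n-4-k-p`, `wght η = -3-2k`. -/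
def gComp (n k : ℕ) (w : ℤ) : Submodule ℝ (Gg n) :=
  Submodule.span ℝ {v : Gg n |
    (v = bY n ∧ w = 1) ∨ ((v = bH n ∨ v = bE n) ∧ w = 0) ∨ (v = bX n ∧ w = -1) ∨
    (∃ p : ℕ, 1 ≤ p ∧ p ≤ 2*n-6 ∧ v = bEps n p ∧ w = (n:ℤ) - 4 - (k:ℤ) - (p:ℤ)) ∨
    (v = bEta n ∧ w = -3 - 2*(k:ℤ))}

/-- The negative part `m = s^{k,n}` of `g` (for `0 ≤ k ≤ n-4`): the span of the basis
elements of negative weight, i.e. of `X`, `ε_p` for `n-3-k ≤ p ≤ 2n-6`, and `η`. -/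
def mSub (n k : ℕ) : Submodule ℝ (Gg n) where
  carrier := {x | x.1 0 = 0 ∧ x.1 1 = 0 ∧ x.1 2 = 0 ∧
    ∀ i : Fin (2*n-6), ((i.val:ℤ) + 1 < (n:ℤ) - 3 - (k:ℤ) → x.2.1 i = 0)}
  add_mem' := by
    rintro a b ⟨ha0, ha1, ha2, ha3⟩ ⟨hb0, hb1, hb2, hb3⟩
    exact ⟨by simp [ha0, hb0], by simp [ha1, hb1], by simp [ha2, hb2],
      fun i hi => by simp [ha3 i hi, hb3 i hi]⟩
  zero_mem' := ⟨rfl, rfl, rfl, fun i _ => rfl⟩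
  smul_mem' := by
    rintro c a ⟨ha0, ha1, ha2, ha3⟩
    exact ⟨by simp [ha0], by simp [ha1], by simp [ha2], fun i hi => by simp [ha3 i hi]⟩

/-- The non-negative part `g⁰` of `g` in the grading of `s^{k,n}`. -/
def g0Sub (n k : ℕ) : Submodule ℝ (Gg n) where
  carrier := {x | x.1 3 = 0 ∧ x.2.2 = 0 ∧
    ∀ i : Fin (2*n-6), ((n:ℤ) - 3 - (k:ℤ) ≤ (i.val:ℤ) + 1 → x.2.1 i = 0)}
  add_mem' := by
    rintro a b ⟨ha0, ha1, ha3⟩ ⟨hb0, hb1, hb3⟩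
    exact ⟨by simp [ha0, hb0], by simp [ha1, hb1], fun i hi => by simp [ha3 i hi, hb3 i hi]⟩
  zero_mem' := ⟨rfl, rfl, fun i _ => rfl⟩
  smul_mem' := by
    rintro c a ⟨ha0, ha1, ha3⟩
    exact ⟨by simp [ha0], by simp [ha1], fun i hi => by simp [ha3 i hi]⟩

/-- The negative part `m` of `g`, as a type. -/
abbrev MT (n k : ℕ) := ↥(mSub n k)

/-- The projection `π_m : g → m` along `g⁰`. -/
def Pm (n k : ℕ) (x : Gg n) : Gg n :=
  (![0, 0, 0, x.1 3],
   (fun i => if (n:ℤ) - 3 - (k:ℤ) ≤ (i.val:ℤ) + 1 then x.2.1 i else 0, x.2.2))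

lemma Pm_mem (n k : ℕ) (x : Gg n) : Pm n k x ∈ mSub n k := by
  refine ⟨?_, ?_, ?_, fun i hi => ?_⟩
  · simp [Pm]
  · simp [Pm]
  · simp [Pm]
  · show (if (n:ℤ) - 3 - (k:ℤ) ≤ (i.val:ℤ) + 1 then x.2.1 i else 0) = 0
    rw [if_neg (by omega)]

/-- The projection `π_m : g → m`, viewed as a map into `m`. -/
def ptoM (n k : ℕ) (x : Gg n) : MT n k := ⟨Pm n k x, Pm_mem n k x⟩

/-- The Lie bracket of `m` (the bracket of `g` restricted to `m`; since `m` is closed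
under the bracket, composing with the projection `π_m` does not change the value). -/
def mBrM (n k : ℕ) (x y : MT n k) : MT n k := ptoM n k (gBr n x.1 y.1)

/-- `ψ` is an ℝ-linear map `m → g`, i.e. an element of `C¹(m,g)`. -/
def IsLin1 (n k : ℕ) (ψ : MT n k → Gg n) : Prop :=
  (∀ x y, ψ (x + y) = ψ x + ψ y) ∧ ∀ (c : ℝ) (x), ψ (c • x) = c • ψ x

/-- `ψ` is an alternating ℝ-bilinear map `m × m → g`, i.e. an element of `C²(m,g)`. -/
def IsAlt2 (n k : ℕ) (ψ : MT n k → MT n k → Gg n) : Prop :=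
  (∀ y, IsLin1 n k (fun x => ψ x y)) ∧ (∀ x, IsLin1 n k (ψ x)) ∧ ∀ x, ψ x x = 0

/-- The coboundary `∂ : C¹(m,g) → C²(m,g)`,
`(∂φ)(x,y) = [x, φ y] - [y, φ x] + φ [x,y]`. -/
def cobound (n k : ℕ) (φ : MT n k → Gg n) : MT n k → MT n k → Gg n :=
  fun x y => gBr n x.1 (φ y) - gBr n y.1 (φ x) + φ (mBrM n k x y)

/-- A 1-cochain is homogeneous of weight `w` if `ψ(g_p) ⊆ g_{p+w}` for all `p < 0`. -/
def Homog1 (n k : ℕ) (w : ℤ) (ψ : MT n k → Gg n) : Prop :=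
  ∀ p : ℤ, p < 0 → ∀ x : MT n k, (x : Gg n) ∈ gComp n k p → ψ x ∈ gComp n k (p + w)

/-- A 2-cochain is homogeneous of weight `w` if `ψ(g_p × g_q) ⊆ g_{p+q+w}` for `p,q < 0`. -/
def Homog2 (n k : ℕ) (w : ℤ) (ψ : MT n k → MT n k → Gg n) : Prop :=
  ∀ p q : ℤ, p < 0 → q < 0 → ∀ x y : MT n k,
    (x : Gg n) ∈ gComp n k p → (y : Gg n) ∈ gComp n k q → ψ x y ∈ gComp n k (p + q + w)

/-- `C¹₊(m,g)`: the span of the homogeneous 1-cochains of positive weight. -/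
def C1plus (n k : ℕ) : Submodule ℝ (MT n k → Gg n) :=
  Submodule.span ℝ {ψ | IsLin1 n k ψ ∧ ∃ w : ℤ, 0 < w ∧ Homog1 n k w ψ}

/-- `C²₊(m,g)`: the span of the homogeneous alternating 2-cochains of positive weight. -/
def C2plus (n k : ℕ) : Submodule ℝ (MT n k → MT n k → Gg n) :=
  Submodule.span ℝ {ψ | IsAlt2 n k ψ ∧ ∃ w : ℤ, 0 < w ∧ Homog2 n k w ψ}

/-- The image `∂(C¹₊(m,g)) ⊆ C²(m,g)`. -/
def imDel (n k : ℕ) : Submodule ℝ (MT n k → MT n k → Gg n) :=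
  Submodule.span ℝ (cobound n k '' {φ | φ ∈ C1plus n k})

/-- The action of `A ∈ g⁰` on 1-cochains: `(A·ψ)(x) = [A, ψ x] - ψ(π_m [A, x])`. -/
def act1 (n k : ℕ) (A : Gg n) (ψ : MT n k → Gg n) : MT n k → Gg n :=
  fun x => gBr n A (ψ x) - ψ (ptoM n k (gBr n A x.1))

/-- The action of `A ∈ g⁰` on 2-cochains:
`(A·ψ)(x,y) = [A, ψ x y] - ψ(π_m [A, x]) y - ψ x (π_m [A, y])`. -/
def act2 (n k : ℕ) (A : Gg n) (ψ : MT n k → MT n k → Gg n) : MT n k → MT n k → Gg n :=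
  fun x y => gBr n A (ψ x y) - ψ (ptoM n k (gBr n A x.1)) y - ψ x (ptoM n k (gBr n A y.1))

/-- The coefficient of `ε_p` (the dual functional `ε*_p`). -/
def epsCoef (n : ℕ) (p : ℕ) (x : Gg n) : ℝ :=
  if h : 1 ≤ p ∧ p ≤ 2*n-6 then x.2.1 ⟨p-1, by omega⟩ else 0

/-- The 1-cochain `ε*_{n-3-k} ⊗ ε_{2n-6}`. -/
def cA (n k : ℕ) : MT n k → Gg n := fun x => epsCoef n (n-3-k) x.1 • bEps n (2*n-6)

/-- The 1-cochain `X* ⊗ ε_{n-4-k}`. -/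
def cB (n k : ℕ) : MT n k → Gg n := fun x => (x : Gg n).1 3 • bEps n (n-4-k)

/-- The 2-cochain `X* ∧ ε*_{n-1+k} ⊗ η`. -/
def cC (n k : ℕ) : MT n k → MT n k → Gg n := fun x y =>
  ((x : Gg n).1 3 * epsCoef n (n-1+k) y.1 - (y : Gg n).1 3 * epsCoef n (n-1+k) x.1) • bEta n

/-- The 2-cochain `ε*_{n-3-k} ∧ η* ⊗ ε_{2n-6}`. -/
def cD (n k : ℕ) : MT n k → MT n k → Gg n := fun x y =>
  (epsCoef n (n-3-k) x.1 * (y : Gg n).2.2 - epsCoef n (n-3-k) y.1 * (x : Gg n).2.2) • bEps n (2*n-6)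

/-- The negative part `m = s^{k,n}`, described as the span of the basis elements of
negative weight: `X`, `ε_p` for `n-3-k ≤ p ≤ 2n-6`, and `η`. -/
def mSpan (n k : ℕ) : Submodule ℝ (Gg n) :=
  Submodule.span ℝ
    {v : Gg n | v = bX n ∨ v = bEta n ∨ ∃ p : ℕ, n-3-k ≤ p ∧ p ≤ 2*n-6 ∧ v = bEps n p}

set_option maxHeartbeats 1000000

lemma gBr_X_eps (n p : ℕ) (hp : 1 ≤ p) : gBr n (bX n) (bEps n p) = bEps n (p+1) := by
  unfold gBr gl2Br phi heisBr bX bEps epsV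
  refine Prod.ext ?_ (Prod.ext ?_ ?_)
  · funext j; fin_cases j <;> simp
  · funext i; simp
    by_cases h : 0 < i.val
    · rw [if_pos h, if_congr (show (i.val - 1 + 1 = p) ↔ (i.val = p) by omega) rfl rfl]
    · rw [if_neg h, if_neg (by omega)]
  · simp

lemma gBr_eps_X (n p : ℕ) (hp : 1 ≤ p) : gBr n (bEps n p) (bX n) = -bEps n (p+1) := by
  unfold gBr gl2Br phi heisBr bX bEps epsV
  refine Prod.ext ?_ (Prod.ext ?_ ?_)
  · funext j; fin_cases j <;> simp
  · funext i; simp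
    by_cases h : 0 < i.val
    · rw [if_pos h, if_congr (show (i.val - 1 + 1 = p) ↔ (i.val = p) by omega) rfl rfl]
    · rw [if_neg h, if_neg (by omega)]
  · simp

lemma gBr_add_left (n : ℕ) (x x' y : Gg n) : gBr n (x + x') y = gBr n x y + gBr n x' y := by
  unfold gBr gl2Br phi heisBr
  refine Prod.ext ?_ (Prod.ext ?_ ?_)
  · funext j; fin_cases j <;> simp <;> ring
  · funext i; simp; split <;> split <;> ring
  · have key : ∀ i : Fin (2*n-6), (-1:ℝ)^(i.val+1)*(x.2.1 i + x'.2.1 i)*y.2.1 i.rev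
        = (-1:ℝ)^(i.val+1)*(x.2.1 i)*y.2.1 i.rev + (-1:ℝ)^(i.val+1)*(x'.2.1 i)*y.2.1 i.rev :=
      fun i => by ring
    simp only [Prod.snd_sub, Prod.snd_add, Prod.fst_add, Pi.add_apply]
    rw [Finset.sum_congr rfl (fun i _ => key i), Finset.sum_add_distrib]
    ring

lemma gBr_add_right (n : ℕ) (x y y' : Gg n) : gBr n x (y + y') = gBr n x y + gBr n x y' := by
  unfold gBr gl2Br phi heisBr
  refine Prod.ext ?_ (Prod.ext ?_ ?_)
  · funext j; fin_cases j <;> simp <;> ring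
  · funext i; simp; split <;> split <;> ring
  · have key : ∀ i : Fin (2*n-6), (-1:ℝ)^(i.val+1)*(x.2.1 i)*(y.2.1 i.rev + y'.2.1 i.rev)
        = (-1:ℝ)^(i.val+1)*(x.2.1 i)*y.2.1 i.rev + (-1:ℝ)^(i.val+1)*(x.2.1 i)*y'.2.1 i.rev :=
      fun i => by ring
    simp only [Prod.snd_sub, Prod.snd_add, Prod.fst_add, Pi.add_apply]
    rw [Finset.sum_congr rfl (fun i _ => key i), Finset.sum_add_distrib]
    ring

lemma gBr_smul_left (n : ℕ) (c : ℝ) (x y : Gg n) : gBr n (c • x) y = c • gBr n x y := by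
  unfold gBr gl2Br phi heisBr
  refine Prod.ext ?_ (Prod.ext ?_ ?_)
  · funext j; fin_cases j <;> simp <;> ring
  · funext i; simp; split <;> split <;> ring
  · have key : ∀ i : Fin (2*n-6), (-1:ℝ)^(i.val+1)*(c * x.2.1 i)*y.2.1 i.rev
        = c * ((-1:ℝ)^(i.val+1)*(x.2.1 i)*y.2.1 i.rev) := fun i => by ring
    simp only [Prod.snd_sub, Prod.snd_add, Prod.fst_add, Prod.smul_fst, Prod.smul_snd,
      Pi.smul_apply, smul_eq_mul]
    rw [Finset.sum_congr rfl (fun i _ => key i), ← Finset.mul_sum]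
    ring

lemma gBr_smul_right (n : ℕ) (c : ℝ) (x y : Gg n) : gBr n x (c • y) = c • gBr n x y := by
  unfold gBr gl2Br phi heisBr
  refine Prod.ext ?_ (Prod.ext ?_ ?_)
  · funext j; fin_cases j <;> simp <;> ring
  · funext i; simp; split <;> split <;> ring
  · have key : ∀ i : Fin (2*n-6), (-1:ℝ)^(i.val+1)*(x.2.1 i)*(c * y.2.1 i.rev)
        = c * ((-1:ℝ)^(i.val+1)*(x.2.1 i)*y.2.1 i.rev) := fun i => by ring
    simp only [Prod.snd_sub, Prod.snd_add, Prod.fst_add, Prod.smul_fst, Prod.smul_snd,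
      Pi.smul_apply, smul_eq_mul]
    rw [Finset.sum_congr rfl (fun i _ => key i), ← Finset.mul_sum]
    ring

lemma gBr_X_X (n : ℕ) : gBr n (bX n) (bX n) = 0 := by
  unfold gBr gl2Br phi heisBr bX
  refine Prod.ext ?_ (Prod.ext ?_ ?_) <;> first
    | (funext j; fin_cases j <;> simp)
    | (funext i; simp)
    | simp

lemma gBr_X_eta (n : ℕ) : gBr n (bX n) (bEta n) = 0 := by
  unfold gBr gl2Br phi heisBr bX bEta etaV
  refine Prod.ext ?_ (Prod.ext ?_ ?_) <;> first
    | (funext j; fin_cases j <;> simp)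
    | (funext i; simp)
    | simp

lemma gBr_eta_X (n : ℕ) : gBr n (bEta n) (bX n) = 0 := by
  unfold gBr gl2Br phi heisBr bX bEta etaV
  refine Prod.ext ?_ (Prod.ext ?_ ?_) <;> first
    | (funext j; fin_cases j <;> simp)
    | (funext i; simp)
    | simp

lemma gBr_eta_eta (n : ℕ) : gBr n (bEta n) (bEta n) = 0 := by
  unfold gBr gl2Br phi heisBr bEta etaV
  refine Prod.ext ?_ (Prod.ext ?_ ?_) <;> first
    | (funext j; fin_cases j <;> simp)
    | (funext i; simp)
    | simp

lemma gBr_eta_eps (n p : ℕ) : gBr n (bEta n) (bEps n p) = 0 := by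
  unfold gBr gl2Br phi heisBr bEta etaV bEps epsV
  refine Prod.ext ?_ (Prod.ext ?_ ?_) <;> first
    | (funext j; fin_cases j <;> simp)
    | (funext i; simp)
    | simp

lemma gBr_eps_eta (n p : ℕ) : gBr n (bEps n p) (bEta n) = 0 := by
  unfold gBr gl2Br phi heisBr bEta etaV bEps epsV
  refine Prod.ext ?_ (Prod.ext ?_ ?_) <;> first
    | (funext j; fin_cases j <;> simp)
    | (funext i; simp)
    | simp

lemma gBr_eps_eps (n p q : ℕ) (hn : 6 ≤ n) (hp1 : 1 ≤ p) (hp2 : p ≤ 2*n-6) :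
    gBr n (bEps n p) (bEps n q) = (if p + q = 2*n-5 then (-1:ℝ)^p else 0) • bEta n := by
  unfold gBr gl2Br phi heisBr bEta etaV bEps epsV
  have hi0 : p - 1 < 2*n-6 := by omega
  have e : ((⟨p-1, hi0⟩ : Fin (2*n-6)) : ℕ) = p-1 := rfl
  refine Prod.ext ?_ (Prod.ext ?_ ?_)
  · funext j; fin_cases j <;> (split <;> simp)
  · funext i; split <;> simp
  · simp only [Prod.snd_sub, Prod.snd_add, Prod.smul_snd, smul_eq_mul, Pi.zero_apply,
      mul_zero, zero_mul, sub_zero, zero_add, zero_sub, neg_zero, add_zero, mul_one]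
    rw [Finset.sum_eq_single (⟨p-1, hi0⟩ : Fin (2*n-6)) ?_ ?_]
    · rw [if_pos (show ((⟨p-1, hi0⟩ : Fin (2*n-6)).val)+1 = p by omega), mul_one,
        Fin.val_rev]
      have hcond : (2*n-6 - (((⟨p-1, hi0⟩ : Fin (2*n-6)) : ℕ) + 1) + 1 = q) ↔ (p + q = 2*n-5) := by
        rw [e]; omega
      rw [if_congr hcond rfl rfl]
      by_cases h : p + q = 2*n-5
      · rw [if_pos h, if_pos h, mul_one]
        congr 1
        rw [e]; omega
      · rw [if_neg h, if_neg h, mul_zero]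
    · intro b _ hb
      have hb' : b.val + 1 ≠ p := fun hc => hb (Fin.ext (by rw [e]; omega))
      rw [if_neg hb', mul_zero, zero_mul]
    · intro h; exact absurd (Finset.mem_univ _) h

lemma gBr_zero_left (n : ℕ) (y : Gg n) : gBr n 0 y = 0 := by
  have h := gBr_smul_left n 0 0 y; simpa using h

lemma gBr_zero_right (n : ℕ) (x : Gg n) : gBr n x 0 = 0 := by
  have h := gBr_smul_right n 0 x 0; simpa using h

lemma bEps_zero (n p : ℕ) (h : 2*n-6 < p) : bEps n p = 0 := by
  unfold bEps epsV
  refine Prod.ext rfl (Prod.ext ?_ rfl)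
  funext i
  have := i.isLt
  show (if (i : ℕ) + 1 = p then (1:ℝ) else 0) = 0
  rw [if_neg (by omega)]

/-- for `0 ≤ k ≤ n-4`, the negative part `m = s^{k,n}` is fundamental:
it is generated as a Lie algebra by its weight `-1` component
`m_{-1} = span{X, ε_{n-3-k}}`, i.e. `m` contains `m_{-1}`, is closed under the bracket,
and is the least subspace with these two properties. -/
theorem skn_fundamental (n k : ℕ) (hn : 6 ≤ n) (hk : k ≤ n - 4) :
    Submodule.span ℝ {bX n, bEps n (n-3-k)} ≤ mSpan n k ∧
    (∀ x ∈ mSpan n k, ∀ y ∈ mSpan n k, gBr n x y ∈ mSpan n k) ∧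
    (∀ S : Submodule ℝ (Gg n), Submodule.span ℝ {bX n, bEps n (n-3-k)} ≤ S →
      (∀ x ∈ S, ∀ y ∈ S, gBr n x y ∈ S) → mSpan n k ≤ S) := by
  have h1 : 1 ≤ n-3-k := by omega
  have h2 : n-3-k ≤ 2*n-6 := by omega
  -- membership of bEps in mSpan
  have hmem : ∀ r : ℕ, n-3-k ≤ r → bEps n r ∈ mSpan n k := by
    intro r hr
    by_cases h : r ≤ 2*n-6
    · exact Submodule.subset_span (Or.inr (Or.inr ⟨r, hr, h, rfl⟩))
    · rw [bEps_zero n r (by omega)]; exact zero_mem _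
  have hXm : bX n ∈ mSpan n k := Submodule.subset_span (Or.inl rfl)
  have hEtam : bEta n ∈ mSpan n k := Submodule.subset_span (Or.inr (Or.inl rfl))
  -- brackets of generators lie in mSpan
  have key : ∀ v ∈ {v : Gg n | v = bX n ∨ v = bEta n ∨
      ∃ p : ℕ, n-3-k ≤ p ∧ p ≤ 2*n-6 ∧ v = bEps n p},
      ∀ w ∈ {v : Gg n | v = bX n ∨ v = bEta n ∨
        ∃ p : ℕ, n-3-k ≤ p ∧ p ≤ 2*n-6 ∧ v = bEps n p},
      gBr n v w ∈ mSpan n k := by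
    rintro v (rfl | rfl | ⟨p, hp1, hp2, rfl⟩) w (rfl | rfl | ⟨q, hq1, hq2, rfl⟩)
    · rw [gBr_X_X]; exact zero_mem _
    · rw [gBr_X_eta]; exact zero_mem _
    · rw [gBr_X_eps n q (by omega)]; exact hmem (q+1) (by omega)
    · rw [gBr_eta_X]; exact zero_mem _
    · rw [gBr_eta_eta]; exact zero_mem _
    · rw [gBr_eta_eps]; exact zero_mem _
    · rw [gBr_eps_X n p (by omega)]; exact neg_mem (hmem (p+1) (by omega))
    · rw [gBr_eps_eta]; exact zero_mem _
    · rw [gBr_eps_eps n p q hn (by omega) hp2]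
      exact Submodule.smul_mem _ _ hEtam
  have key2 : ∀ v ∈ {v : Gg n | v = bX n ∨ v = bEta n ∨
      ∃ p : ℕ, n-3-k ≤ p ∧ p ≤ 2*n-6 ∧ v = bEps n p},
      ∀ y ∈ mSpan n k, gBr n v y ∈ mSpan n k := by
    intro v hv y hy
    induction hy using Submodule.span_induction with
    | mem w hw => exact key v hv w hw
    | zero => rw [gBr_zero_right]; exact zero_mem _
    | add a b _ _ ha hb => rw [gBr_add_right]; exact add_mem ha hb
    | smul c a _ ha => rw [gBr_smul_right]; exact Submodule.smul_mem _ c ha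
  refine ⟨?_, ?_, ?_⟩
  · apply Submodule.span_le.2
    rintro v (rfl | rfl)
    · exact hXm
    · exact hmem _ le_rfl
  · intro x hx y hy
    induction hx using Submodule.span_induction with
    | mem v hv => exact key2 v hv y hy
    | zero => rw [gBr_zero_left]; exact zero_mem _
    | add a b _ _ ha hb => rw [gBr_add_left]; exact add_mem ha hb
    | smul c a _ ha => rw [gBr_smul_left]; exact Submodule.smul_mem _ c ha
  · intro S hS hcl
    have hX : bX n ∈ S := hS (Submodule.subset_span (by left; rfl))
    have hE0 : bEps n (n-3-k) ∈ S := hS (Submodule.subset_span (by right; rfl))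
    have hEps : ∀ d : ℕ, bEps n (n-3-k+d) ∈ S := by
      intro d
      induction d with
      | zero => simpa using hE0
      | succ d ih =>
        have h := hcl _ hX _ ih
        rw [gBr_X_eps n _ (by omega)] at h
        exact h
    have hEps' : ∀ p : ℕ, n-3-k ≤ p → bEps n p ∈ S := by
      intro p hp
      have h := hEps (p - (n-3-k))
      rwa [show n-3-k + (p-(n-3-k)) = p by omega] at h
    have hEta : bEta n ∈ S := by
      have hb := hcl _ (hEps' (n-3-k) le_rfl) _ (hEps' (n-2+k) (by omega))
      rw [gBr_eps_eps n _ _ hn (by omega) (by omega), if_pos (by omega)] at hb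
      have h := S.smul_mem ((-1:ℝ)^(n-3-k)) hb
      rwa [smul_smul, ← pow_add, Even.neg_one_pow ⟨n-3-k, rfl⟩, one_smul] at h
    apply Submodule.span_le.2
    rintro v (rfl | rfl | ⟨p, hp1, hp2, rfl⟩)
    · exact hX
    · exact hEta
    · exact hEps' p hp1
end
end

section
/- For every integer k with 0 ≤ k ≤ n−4, the graded Lie algebra g satisfies the transitivity condition: if x ∈ g is weight-homogeneous of non-negative weight and [x, y] = 0 for every y in the weight −1 component m_{−1} = span{X, ε_{n−3−k}}, then x = 0. -/
noncomputable section

open scoped BigOperators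

lemma phi_zero_v (n : ℕ) (a : G2) : phi n a 0 = 0 := by
  unfold phi
  refine Prod.ext ?_ ?_
  · funext i; simp
  · simp

lemma phi_zero_a (n : ℕ) (v : Hs n) : phi n 0 v = 0 := by
  unfold phi
  refine Prod.ext ?_ ?_
  · funext i; simp
  · simp

lemma heisBr_zero_right (n : ℕ) (v : Hs n) : heisBr n v 0 = 0 := by
  unfold heisBr
  refine Prod.ext rfl ?_
  simp

/-- for `0 ≤ k ≤ n-4`, the graded Lie algebra `g` (with the grading of
`s^{k,n}`) is transitive: if `x` is weight-homogeneous of non-negative weight and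
`[x, y] = 0` for every `y` in the weight `-1` component `m_{-1} = span{X, ε_{n-3-k}}`,
then `x = 0`. -/
theorem skn_transitive (n k : ℕ) (hn : 6 ≤ n) (hk : k ≤ n - 4)
    (w : ℤ) (hw : 0 ≤ w) (x : Gg n) (hx : x ∈ gComp n k w)
    (hbr : ∀ y ∈ gComp n k (-1), gBr n x y = 0) :
    x = 0 := by
  have hXmem : bX n ∈ gComp n k (-1) :=
    Submodule.subset_span (Or.inr (Or.inr (Or.inl ⟨rfl, rfl⟩)))
  have hEmem : bEps n (n - 3 - k) ∈ gComp n k (-1) := by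
    apply Submodule.subset_span
    refine Or.inr (Or.inr (Or.inr (Or.inl ⟨n - 3 - k, by omega, by omega, rfl, by omega⟩)))
  have h1 := hbr _ hXmem
  have h2 := hbr _ hEmem
  -- coordinate facts from homogeneity
  have hc3 : x.1 3 = 0 := by
    have hf : gComp n k w ≤
        LinearMap.ker ((LinearMap.proj (3 : Fin 4)).comp (LinearMap.fst ℝ G2 (Hs n))) := by
      unfold gComp
      apply Submodule.span_le.mpr
      rintro v hv
      simp only [Set.mem_setOf_eq] at hv
      simp only [SetLike.mem_coe, LinearMap.mem_ker, LinearMap.coe_comp, Function.comp_apply,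
        LinearMap.fst_apply, LinearMap.proj_apply]
      rcases hv with ⟨rfl, h⟩ | ⟨h', h⟩ | ⟨rfl, h⟩ | ⟨p, hq1, hq2, rfl, h⟩ | ⟨rfl, h⟩
      · simp [bY]
      · rcases h' with rfl | rfl <;> simp [bH, bE]
      · exfalso; omega
      · simp [bEps]
      · simp [bEta]
    simpa using hf hx
  have hceta : x.2.2 = 0 := by
    have hf : gComp n k w ≤
        LinearMap.ker ((LinearMap.snd ℝ (Fin (2*n-6) → ℝ) ℝ).comp (LinearMap.snd ℝ G2 (Hs n))) := by
      unfold gComp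
      apply Submodule.span_le.mpr
      rintro v hv
      simp only [Set.mem_setOf_eq] at hv
      simp only [SetLike.mem_coe, LinearMap.mem_ker, LinearMap.coe_comp, Function.comp_apply,
        LinearMap.snd_apply]
      rcases hv with ⟨rfl, h⟩ | ⟨h', h⟩ | ⟨rfl, h⟩ | ⟨p, hq1, hq2, rfl, h⟩ | ⟨rfl, h⟩
      · simp [bY]
      · rcases h' with rfl | rfl <;> simp [bH, bE]
      · simp [bX]
      · simp [bEps, epsV]
      · exfalso; omega
    simpa using hf hx
  have hlast : x.2.1 ⟨2*n-7, by omega⟩ = 0 := by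
    have hf : gComp n k w ≤
        LinearMap.ker ((LinearMap.proj (⟨2*n-7, by omega⟩ : Fin (2*n-6))).comp
          ((LinearMap.fst ℝ (Fin (2*n-6) → ℝ) ℝ).comp (LinearMap.snd ℝ G2 (Hs n)))) := by
      unfold gComp
      apply Submodule.span_le.mpr
      rintro v hv
      simp only [Set.mem_setOf_eq] at hv
      simp only [SetLike.mem_coe, LinearMap.mem_ker, LinearMap.coe_comp, Function.comp_apply,
        LinearMap.snd_apply, LinearMap.fst_apply, LinearMap.proj_apply]
      rcases hv with ⟨rfl, h⟩ | ⟨h', h⟩ | ⟨rfl, h⟩ | ⟨p, hq1, hq2, rfl, h⟩ | ⟨rfl, h⟩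
      · simp [bY]
      · rcases h' with rfl | rfl <;> simp [bH, bE]
      · simp [bX]
      · simp only [bEps, epsV]
        rw [if_neg (by omega)]
      · simp [bEta, etaV]
    simpa using hf hx
  -- bracket with X
  have hc0 : x.1 0 = 0 := by
    have h := congrFun (congrArg Prod.fst h1) 1
    simp [gBr, gl2Br, bX] at h
    linarith
  have hc1 : x.1 1 = 0 := by
    have h := congrFun (congrArg Prod.fst h1) 3
    simp [gBr, gl2Br, bX] at h
    linarith
  have heps : ∀ i : Fin (2*n-6), x.2.1 i = 0 := by
    intro i
    by_cases hi : i.val = 2*n-7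
    · have : i = ⟨2*n-7, by omega⟩ := Fin.ext hi
      rw [this]; exact hlast
    · have h := congrFun (congrArg (fun z : Gg n => z.2.1) h1) ⟨i.val + 1, by omega⟩
      simp only [gBr, bX, phi_zero_v, heisBr_zero_right, phi] at h
      simp only [Prod.fst_zero, Prod.snd_zero, Pi.zero_apply, Prod.fst_add, Prod.fst_sub,
        Pi.add_apply, Pi.sub_apply] at h
      have hieq : (⟨i.val + 1 - 1, by omega⟩ : Fin (2*n-6)) = i := Fin.ext (by simp)
      split_ifs at h <;>
        first
          | omega
          | (rw [hieq] at h; simpa using h)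
  -- bracket with eps_{n-3-k}
  have hc2 : x.1 2 = 0 := by
    have h := congrFun (congrArg (fun z : Gg n => z.2.1) h2) ⟨n - 4 - k, by omega⟩
    simp only [gBr, bEps, phi_zero_a, heisBr, phi] at h
    simp only [Prod.fst_zero, Prod.snd_zero, Pi.zero_apply, Prod.fst_add, Prod.fst_sub,
      Pi.add_apply, Pi.sub_apply, epsV] at h
    rw [hc0, hc1, hc3] at h
    rw [if_pos (by omega : (n - 4 - k) + 1 = n - 3 - k)] at h
    simpa using h
  refine Prod.ext ?_ (Prod.ext ?_ ?_)
  · funext i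
    fin_cases i
    · exact hc0
    · exact hc1
    · exact hc2
    · exact hc3
  · funext i; exact heps i
  · exact hceta
end
end

section
/- The first prolongation space g_1 is one-dimensional, spanned by the map u_Y defined by u_Y(X) = −(ad_g H)|_m, u_Y(ε_1) = 0, u_Y(ε_i) = (i−1)(2n−5−i)·ε_{i−1} for 2 ≤ i ≤ 2n−6, and u_Y(η) = 0; and the second prolongation space g_2 is zero. -/
/-!
In the basis `X, ε_1, …, ε_{2n-6}, η` of `m` the only brackets are `[X, ε_p] = ε_{p+1}` and
`[ε_p, ε_{2n-5-p}] = (-1)^p η`. Hence `m` is generated by `X` and `ε_1`, and every degree-0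
derivation is the restriction to `m` of `ad` of a diagonal element of `gl₂(ℝ)`.

For `u ∈ g_1`, the Leibniz rule on `(ε_1, ε_3)` and `(ε_1, ε_4)` kills `u(ε_1)`, the one on `(X, η)`
makes `u(X)` a multiple `c • (-ad H)`, and the ones on `(X, ε_q)` determine `u(ε_{q+1})` from
`u(ε_q)`. Since `u_Y` satisfies the same recursion, `u = c • u_Y`.

For `w ∈ g_2` this gives `w(X) = γ_X u_Y` and `w(ε_1) = γ_1 u_Y`. The Leibniz rule on `(ε_1, ε_2)`
reads `2(2n-7) γ_1 = 0`, and along the recursion on `(X, ε_q)` the `m`-part of `w(ε_q)` is `γ_X`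
times a positive multiple of `ε_{q-2}`, which `[X, ε_{2n-6}] = 0` allows only for `γ_X = 0`.
All remaining components of `w` vanish for degree reasons.
-/

noncomputable section

open scoped BigOperators

/-- `D : m → m` is an ℝ-linear map. -/
def IsLinM (n k : ℕ) (D : MT n k → MT n k) : Prop :=
  (∀ x y, D (x + y) = D x + D y) ∧ ∀ (c : ℝ) (x), D (c • x) = c • D x

/-- `D` is a degree-0 derivation of `m` (with the grading of `s^{n-4,n}`, i.e.
`wght X = -1`, `wght ε_i = -i`, `wght η = 5-2n`): `D` is linear, preserves every graded
component of `m`, and satisfies the Leibniz rule.  The space of such `D` is `g_0`. -/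
def IsDer0 (n : ℕ) (D : MT n (n-4) → MT n (n-4)) : Prop :=
  IsLinM n (n-4) D ∧
  (∀ w : ℤ, ∀ x : MT n (n-4),
    (x : Gg n) ∈ gComp n (n-4) w → (D x : Gg n) ∈ gComp n (n-4) w) ∧
  ∀ x y, D (mBrM n (n-4) x y) = mBrM n (n-4) (D x) y + mBrM n (n-4) x (D y)

/-- An element of the first prolongation `g_1`: a linear map `u : m → m ⊕ g_0`,
encoded as the pair `p = (u_m, u_0)` of its two components (an element `d ∈ g_0` is
recorded through its action `d : m → m`).  The conditions say: `u` is linear,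
`u(m_{-1}) ⊆ g_0`, `u(m_{-j}) ⊆ m_{1-j}` for `j ≥ 2`, and
`u([x,y]) = ⟦u(x), y⟧ + ⟦x, u(y)⟧` (separated into its `m`- and `g_0`-components),
where `⟦d, y⟧ = d(y) = -⟦y, d⟧` for `d ∈ g_0`, `y ∈ m`. -/
def IsG1 (n : ℕ)
    (p : (MT n (n-4) → MT n (n-4)) × (MT n (n-4) → MT n (n-4) → MT n (n-4))) : Prop :=
  IsLinM n (n-4) p.1 ∧
  (∀ x x', p.2 (x + x') = p.2 x + p.2 x') ∧
  (∀ (c : ℝ) (x), p.2 (c • x) = c • p.2 x) ∧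
  (∀ x, IsDer0 n (p.2 x)) ∧
  (∀ x : MT n (n-4), (x : Gg n) ∈ gComp n (n-4) (-1) → p.1 x = 0) ∧
  (∀ j : ℤ, j ≤ -2 → ∀ x : MT n (n-4), (x : Gg n) ∈ gComp n (n-4) j →
    (p.1 x : Gg n) ∈ gComp n (n-4) (j + 1) ∧ p.2 x = 0) ∧
  (∀ x y, p.1 (mBrM n (n-4) x y) =
    mBrM n (n-4) (p.1 x) y + p.2 x y + mBrM n (n-4) x (p.1 y) - p.2 y x) ∧
  (∀ x y, p.2 (mBrM n (n-4) x y) = 0)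

/-- An element of the second prolongation `g_2`: a linear map `w : m → m ⊕ g_0 ⊕ g_1`,
encoded as the triple `t = (w_m, w_0, w_1)` of its components.  The conditions say:
`w` is linear, `w(m_{-1}) ⊆ g_1`, `w(m_{-2}) ⊆ g_0`, `w(m_{-j}) ⊆ m_{2-j}` for `j ≥ 3`,
`w` takes values in `m ⊕ g_0 ⊕ g_1`, and `w([x,y]) = ⟦w(x), y⟧ + ⟦x, w(y)⟧`
(separated into its `m`-, `g_0`- and `g_1`-components), where additionally
`⟦u, y⟧ = u(y) = -⟦y, u⟧ ∈ m ⊕ g_0` for `u ∈ g_1`, `y ∈ m`. -/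
def IsG2 (n : ℕ)
    (t : (MT n (n-4) → MT n (n-4)) × (MT n (n-4) → MT n (n-4) → MT n (n-4)) ×
         (MT n (n-4) → (MT n (n-4) → MT n (n-4)) × (MT n (n-4) → MT n (n-4) → MT n (n-4)))) :
    Prop :=
  IsLinM n (n-4) t.1 ∧
  (∀ x x', t.2.1 (x + x') = t.2.1 x + t.2.1 x') ∧
  (∀ (c : ℝ) (x), t.2.1 (c • x) = c • t.2.1 x) ∧
  (∀ x x', t.2.2 (x + x') = t.2.2 x + t.2.2 x') ∧
  (∀ (c : ℝ) (x), t.2.2 (c • x) = c • t.2.2 x) ∧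
  (∀ x, IsDer0 n (t.2.1 x)) ∧
  (∀ x, IsG1 n (t.2.2 x)) ∧
  (∀ x : MT n (n-4), (x : Gg n) ∈ gComp n (n-4) (-1) → t.1 x = 0 ∧ t.2.1 x = 0) ∧
  (∀ x : MT n (n-4), (x : Gg n) ∈ gComp n (n-4) (-2) → t.1 x = 0 ∧ t.2.2 x = 0) ∧
  (∀ j : ℤ, j ≤ -3 → ∀ x : MT n (n-4), (x : Gg n) ∈ gComp n (n-4) j →
    (t.1 x : Gg n) ∈ gComp n (n-4) (j + 2) ∧ t.2.1 x = 0 ∧ t.2.2 x = 0) ∧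
  (∀ x y, t.1 (mBrM n (n-4) x y) =
    mBrM n (n-4) (t.1 x) y + t.2.1 x y + (t.2.2 x).1 y
      + mBrM n (n-4) x (t.1 y) - t.2.1 y x - (t.2.2 y).1 x) ∧
  (∀ x y, t.2.1 (mBrM n (n-4) x y) = fun z => (t.2.2 x).2 y z - (t.2.2 y).2 x z) ∧
  (∀ x y, t.2.2 (mBrM n (n-4) x y) = 0)

/-- The `m`-component of the map `u_Y`: `X ↦ 0`, `ε_1 ↦ 0`,
`ε_i ↦ (i-1)(2n-5-i)·ε_{i-1}` for `2 ≤ i ≤ 2n-6`, `η ↦ 0` (this is `φ(Y)` on the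
Heisenberg part of `m`). -/
def uYm (n : ℕ) : MT n (n-4) → MT n (n-4) :=
  fun x => ptoM n (n-4) ((0 : G2), phi n ![1,0,0,0] (x : Gg n).2)

/-- The `g_0`-component of the map `u_Y`: `X ↦ -(ad H)|_m`, and `0` on `ε_i`, `η`. -/
def uY0 (n : ℕ) : MT n (n-4) → MT n (n-4) → MT n (n-4) :=
  fun x y => (-(x : Gg n).1 3) • ptoM n (n-4) (gBr n (bH n) (y : Gg n))

theorem IsLinearMap.smul {M N : Type*} [AddCommMonoid M] [AddCommMonoid N] [Module ℝ M]
    [Module ℝ N] {f : M → N} (hf : IsLinearMap ℝ f) (c : ℝ) :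
    IsLinearMap ℝ (c • f) where
  map_add x y := by simp [hf.map_add]
  map_smul a x := by simp [hf.map_smul, smul_comm c a]

section Coordinates

variable {n : ℕ}

def coordX : MT n (n-4) →ₗ[ℝ] ℝ where
  toFun x := (x : Gg n).1 3
  map_add' _ _ := rfl
  map_smul' _ _ := rfl

-- `coordEps p` and `eEps n p` below vanish unless `1 ≤ p ≤ 2n-6`, so that `ε_0 = ε_{2n-5} = 0`.
def coordEps (p : ℕ) : MT n (n-4) →ₗ[ℝ] ℝ where
  toFun x := epsCoef n p x
  map_add' x y := by unfold epsCoef; split_ifs <;> simp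
  map_smul' c x := by unfold epsCoef; split_ifs <;> simp

def coordEta : MT n (n-4) →ₗ[ℝ] ℝ where
  toFun x := (x : Gg n).2.2
  map_add' _ _ := rfl
  map_smul' _ _ := rfl

theorem coordEps_of_not_mem {p : ℕ} (hp : ¬(1 ≤ p ∧ p ≤ 2*n-6)) (x : MT n (n-4)) :
    coordEps p x = 0 :=
  dif_neg hp

theorem ext_coords {x y : MT n (n-4)} (hX : coordX x = coordX y)
    (hEps : ∀ p, 1 ≤ p → p ≤ 2*n-6 → coordEps p x = coordEps p y)
    (hEta : coordEta x = coordEta y) : x = y := by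
  obtain ⟨hx0, hx1, hx2, -⟩ := x.2
  obtain ⟨hy0, hy1, hy2, -⟩ := y.2
  refine Subtype.ext (Prod.ext ?_ (Prod.ext (funext fun i => ?_) hEta))
  · funext j
    fin_cases j
    exacts [hx0.trans hy0.symm, hx1.trans hy1.symm, hx2.trans hy2.symm, hX]
  · simpa [coordEps, epsCoef] using hEps (i + 1) (by omega) (by omega)

theorem coordX_ptoM (z : Gg n) : coordX (ptoM n (n-4) z) = z.1 3 := rfl

theorem coordEps_ptoM (p : ℕ) (z : Gg n) : coordEps p (ptoM n (n-4) z) = epsCoef n p z := by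
  simp only [coordEps, epsCoef, ptoM, Pm, LinearMap.coe_mk, AddHom.coe_mk]
  split_ifs <;> first | rfl | omega

theorem coordEta_ptoM (z : Gg n) : coordEta (ptoM n (n-4) z) = z.2.2 := rfl

def eX (n : ℕ) : MT n (n-4) := ⟨bX n, rfl, rfl, rfl, fun _ _ => rfl⟩

def eEps (n p : ℕ) : MT n (n-4) := ⟨bEps n p, rfl, rfl, rfl, fun _ h => absurd h (by omega)⟩

def eEta (n : ℕ) : MT n (n-4) := ⟨bEta n, rfl, rfl, rfl, fun _ _ => rfl⟩

@[simp] theorem coordX_eX : coordX (eX n) = 1 := rfl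
@[simp] theorem coordEps_eX (p : ℕ) : coordEps p (eX n) = 0 := by
  simp [coordEps, epsCoef, eX, bX]
@[simp] theorem coordEta_eX : coordEta (eX n) = 0 := rfl
@[simp] theorem coordX_eEps (p : ℕ) : coordX (eEps n p) = 0 := rfl
@[simp] theorem coordEps_eEps (p q : ℕ) :
    coordEps q (eEps n p) = if q = p ∧ 1 ≤ p ∧ p ≤ 2*n-6 then 1 else 0 := by
  simp only [coordEps, epsCoef, eEps, bEps, epsV, LinearMap.coe_mk, AddHom.coe_mk]
  split_ifs <;> first | rfl | omega
@[simp] theorem coordEta_eEps (p : ℕ) : coordEta (eEps n p) = 0 := rfl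
@[simp] theorem coordX_eEta : coordX (eEta n) = 0 := rfl
@[simp] theorem coordEps_eEta (p : ℕ) : coordEps p (eEta n) = 0 := by
  simp [coordEps, epsCoef, eEta, bEta, etaV]
@[simp] theorem coordEta_eEta : coordEta (eEta n) = 1 := rfl

theorem eEps_eq_zero_of_lt {p : ℕ} (hp : 2*n-6 < p) : eEps n p = 0 :=
  ext_coords (by simp) (fun q _ _ => by rw [coordEps_eEps, if_neg (by omega), map_zero]) (by simp)

theorem cast_two_mul_sub_six (hn : 3 ≤ n) : ((2*n-6 : ℕ) : ℝ) = 2*n - 6 := by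
  rw [Nat.cast_sub (by omega)]
  push_cast
  ring

theorem eEps_ne_zero {p : ℕ} (hp1 : 1 ≤ p) (hpN : p ≤ 2*n-6) : eEps n p ≠ 0 := fun h => by
  simpa [hp1, hpN] using congrArg (coordEps p) h

theorem eq_sum_basis (x : MT n (n-4)) :
    x = coordX x • eX n + ∑ p ∈ Finset.Icc 1 (2*n-6), coordEps p x • eEps n p
      + coordEta x • eEta n := by
  refine ext_coords ?_ (fun q hq1 hqN => ?_) ?_
  · simp [map_sum]
  · simp only [map_add, map_smul, map_sum, coordEps_eX, coordEps_eEps, coordEps_eEta,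
      smul_eq_mul, mul_ite, mul_one, mul_zero, zero_add, add_zero]
    rw [Finset.sum_eq_single q (fun p _ hpq => if_neg fun h => hpq h.1.symm)
      (fun h => absurd (Finset.mem_Icc.2 ⟨hq1, hqN⟩) h), if_pos ⟨rfl, hq1, hqN⟩]
  · simp [map_sum]

theorem isLinearMap_ext_basis {M : Type*} [AddCommGroup M] [Module ℝ M] {f g : MT n (n-4) → M}
    (hf : IsLinearMap ℝ f) (hg : IsLinearMap ℝ g) (hX : f (eX n) = g (eX n))
    (hEps : ∀ p, 1 ≤ p → p ≤ 2*n-6 → f (eEps n p) = g (eEps n p))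
    (hEta : f (eEta n) = g (eEta n)) : f = g := by
  have expand : ∀ F : MT n (n-4) →ₗ[ℝ] M, ∀ x, F x = coordX x • F (eX n)
      + ∑ p ∈ Finset.Icc 1 (2*n-6), coordEps p x • F (eEps n p)
      + coordEta x • F (eEta n) := by
    intro F x
    conv_lhs => rw [eq_sum_basis x]
    simp only [map_add, map_sum, map_smul]
  funext x
  calc f x = hf.mk' f x := rfl
    _ = hg.mk' g x := by
      rw [expand (hf.mk' f) x, expand (hg.mk' g) x]
      simp only [IsLinearMap.mk'_apply, hX, hEta]
      congr 2
      exact Finset.sum_congr rfl fun p hp => by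
        rw [hEps p (Finset.mem_Icc.1 hp).1 (Finset.mem_Icc.1 hp).2]

theorem isLinearMap_eq_zero_of_basis {M : Type*} [AddCommGroup M] [Module ℝ M]
    {f : MT n (n-4) → M} (hf : IsLinearMap ℝ f) (hX : f (eX n) = 0)
    (hEps : ∀ p, 1 ≤ p → p ≤ 2*n-6 → f (eEps n p) = 0) (hEta : f (eEta n) = 0) : f = 0 :=
  isLinearMap_ext_basis hf (0 : MT n (n-4) →ₗ[ℝ] M).isLinear hX hEps hEta

end Coordinates

section Bracket

variable {n : ℕ}

theorem coordEps_eq_apply {p : ℕ} {i : Fin (2*n-6)} (h : i.val + 1 = p) (x : MT n (n-4)) :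
    coordEps p x = (x : Gg n).2.1 i := by
  subst h
  simp [coordEps, epsCoef]

theorem coordX_mBrM (x y : MT n (n-4)) : coordX (mBrM n (n-4) x y) = 0 := by
  obtain ⟨-, hx1, -, -⟩ := x.2
  obtain ⟨-, hy1, -, -⟩ := y.2
  simp [coordX, mBrM, ptoM, Pm, gBr, gl2Br, hx1, hy1]

theorem coordEps_mBrM {p : ℕ} (hp1 : 1 ≤ p) (hpN : p ≤ 2*n-6) (x y : MT n (n-4)) :
    coordEps p (mBrM n (n-4) x y)
      = coordX x * coordEps (p-1) y - coordX y * coordEps (p-1) x := by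
  obtain ⟨hx0, hx1, hx2, -⟩ := x.2
  obtain ⟨hy0, hy1, hy2, -⟩ := y.2
  simp only [coordEps, coordX, epsCoef, mBrM, ptoM, Pm, gBr, phi, heisBr, LinearMap.coe_mk,
    AddHom.coe_mk, dif_pos (And.intro hp1 hpN), hx0, hx1, hx2, hy0, hy1, hy2]
  rw [if_pos (by omega)]
  simp only [Prod.fst_add, Prod.fst_sub, Pi.add_apply, Pi.sub_apply, Pi.zero_apply,
    zero_mul, add_zero, zero_add]
  split_ifs <;> first | rfl | omega

theorem coordEta_mBrM (x y : MT n (n-4)) :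
    coordEta (mBrM n (n-4) x y)
      = ∑ p ∈ Finset.range (2*n-6), (-1) ^ (p+1) * coordEps (p+1) x * coordEps (2*n-6-p) y := by
  obtain ⟨-, -, hx2, -⟩ := x.2
  obtain ⟨-, -, hy2, -⟩ := y.2
  simp only [coordEta, mBrM, ptoM, Pm, gBr, phi, heisBr, LinearMap.coe_mk, AddHom.coe_mk, hx2, hy2,
    Prod.snd_add, Prod.snd_sub, mul_zero, zero_mul, sub_zero, zero_add]
  rw [Finset.sum_range (M := ℝ)]
  refine Finset.sum_congr rfl fun i _ => ?_
  rw [coordEps_eq_apply rfl, coordEps_eq_apply (i := i.rev) (by rw [Fin.val_rev]; omega)]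

theorem mBrM_add_left (x x' y : MT n (n-4)) :
    mBrM n (n-4) (x + x') y = mBrM n (n-4) x y + mBrM n (n-4) x' y := by
  refine ext_coords (by simp [coordX_mBrM]) (fun p hp1 hpN => ?_) ?_
  · simp only [map_add, coordEps_mBrM hp1 hpN]
    ring
  · simp only [map_add, coordEta_mBrM, ← Finset.sum_add_distrib]
    exact Finset.sum_congr rfl fun _ _ => by ring

theorem mBrM_add_right (x y y' : MT n (n-4)) :
    mBrM n (n-4) x (y + y') = mBrM n (n-4) x y + mBrM n (n-4) x y' := by
  refine ext_coords (by simp [coordX_mBrM]) (fun p hp1 hpN => ?_) ?_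
  · simp only [map_add, coordEps_mBrM hp1 hpN]
    ring
  · simp only [map_add, coordEta_mBrM, ← Finset.sum_add_distrib]
    exact Finset.sum_congr rfl fun _ _ => by ring

theorem mBrM_smul_left (c : ℝ) (x y : MT n (n-4)) :
    mBrM n (n-4) (c • x) y = c • mBrM n (n-4) x y := by
  refine ext_coords (by simp [coordX_mBrM]) (fun p hp1 hpN => ?_) ?_
  · simp only [map_smul, smul_eq_mul, coordEps_mBrM hp1 hpN]
    ring
  · simp only [map_smul, smul_eq_mul, coordEta_mBrM, Finset.mul_sum]
    exact Finset.sum_congr rfl fun _ _ => by ring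

theorem mBrM_smul_right (c : ℝ) (x y : MT n (n-4)) :
    mBrM n (n-4) x (c • y) = c • mBrM n (n-4) x y := by
  refine ext_coords (by simp [coordX_mBrM]) (fun p hp1 hpN => ?_) ?_
  · simp only [map_smul, smul_eq_mul, coordEps_mBrM hp1 hpN]
    ring
  · simp only [map_smul, smul_eq_mul, coordEta_mBrM, Finset.mul_sum]
    exact Finset.sum_congr rfl fun _ _ => by ring

@[simp] theorem mBrM_zero_left (y : MT n (n-4)) : mBrM n (n-4) 0 y = 0 := by
  simpa using mBrM_smul_left 0 0 y

@[simp] theorem mBrM_zero_right (x : MT n (n-4)) : mBrM n (n-4) x 0 = 0 := by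
  simpa using mBrM_smul_right 0 x 0

theorem mBrM_eX_eX : mBrM n (n-4) (eX n) (eX n) = 0 :=
  ext_coords (by simp [coordX_mBrM]) (fun p hp1 hpN => by simp [coordEps_mBrM hp1 hpN])
    (by simp [coordEta_mBrM])

@[simp] theorem mBrM_eEta_right (x : MT n (n-4)) : mBrM n (n-4) x (eEta n) = 0 :=
  ext_coords (by simp [coordX_mBrM]) (fun p hp1 hpN => by simp [coordEps_mBrM hp1 hpN])
    (by simp [coordEta_mBrM])

theorem mBrM_eX_eEps {p : ℕ} (hp : 1 ≤ p) : mBrM n (n-4) (eX n) (eEps n p) = eEps n (p+1) := by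
  refine ext_coords (by simp [coordX_mBrM]) (fun q hq1 hqN => ?_) (by simp [coordEta_mBrM])
  simp only [coordEps_mBrM hq1 hqN, coordX_eX, coordX_eEps, coordEps_eEps, one_mul, zero_mul,
    sub_zero]
  split_ifs <;> first | rfl | (exfalso; omega)

theorem mBrM_eEps_eEps_of_add_ne {p q : ℕ} (h : p + q ≠ 2*n-5) :
    mBrM n (n-4) (eEps n p) (eEps n q) = 0 := by
  refine ext_coords (by simp [coordX_mBrM]) (fun r hr1 hrN => by simp [coordEps_mBrM hr1 hrN]) ?_
  simp only [coordEta_mBrM, coordEps_eEps, map_zero]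
  refine Finset.sum_eq_zero fun r hr => ?_
  simp only [Finset.mem_range] at hr
  split_ifs <;> first | simp only [mul_zero, zero_mul] | (exfalso; omega)

theorem mBrM_eEps_eEps_of_add_eq {p q : ℕ} (hp : 1 ≤ p) (hq : 1 ≤ q) (h : p + q = 2*n-5) :
    mBrM n (n-4) (eEps n p) (eEps n q) = (-1 : ℝ) ^ p • eEta n := by
  refine ext_coords (by simp [coordX_mBrM]) (fun r hr1 hrN => by simp [coordEps_mBrM hr1 hrN]) ?_
  simp only [coordEta_mBrM, coordEps_eEps, map_smul, coordEta_eEta, smul_eq_mul, mul_one]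
  rw [Finset.sum_eq_single (p-1)]
  · rw [if_pos (by omega), if_pos (by omega), Nat.sub_add_cancel hp]
    ring
  · intro r _ hr
    rw [if_neg (by omega)]
    ring
  · intro hr
    simp only [Finset.mem_range] at hr
    omega

end Bracket

section Grading

variable {n : ℕ}

theorem coe_eX_mem : (eX n : Gg n) ∈ gComp n (n-4) (-1) :=
  Submodule.subset_span (Or.inr (Or.inr (Or.inl ⟨rfl, rfl⟩)))

theorem coe_eEps_mem (hn : 4 ≤ n) {p : ℕ} (hp1 : 1 ≤ p) (hpN : p ≤ 2*n-6) :
    (eEps n p : Gg n) ∈ gComp n (n-4) (-p) :=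
  Submodule.subset_span (Or.inr (Or.inr (Or.inr (Or.inl ⟨p, hp1, hpN, rfl, by omega⟩))))

theorem coe_eEps_one_mem (hn : 4 ≤ n) : (eEps n 1 : Gg n) ∈ gComp n (n-4) (-1) := by
  simpa using coe_eEps_mem hn le_rfl (by omega)

theorem coe_eEta_mem (hn : 4 ≤ n) : (eEta n : Gg n) ∈ gComp n (n-4) (5 - 2*n) :=
  Submodule.subset_span (Or.inr (Or.inr (Or.inr (Or.inr ⟨rfl, by omega⟩))))

theorem coordX_eq_zero_of_mem {w : ℤ} {x : MT n (n-4)} (hx : (x : Gg n) ∈ gComp n (n-4) w)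
    (hw : w ≠ -1) : coordX x = 0 := by
  refine (Submodule.span_le (p := LinearMap.ker
    ((LinearMap.proj 3).comp (LinearMap.fst ℝ G2 (Hs n))))).2 ?_ hx
  rintro v (⟨rfl, -⟩ | ⟨rfl | rfl, -⟩ | ⟨rfl, rfl⟩ | ⟨p, -, -, rfl, -⟩ |
    ⟨rfl, -⟩)
  all_goals first | exact absurd rfl hw | simp [bY, bH, bE, bEps, bEta]

theorem coordEps_eq_zero_of_mem (hn : 4 ≤ n) {w : ℤ} {p : ℕ} {x : MT n (n-4)}
    (hx : (x : Gg n) ∈ gComp n (n-4) w) (hw : w ≠ -p) : coordEps p x = 0 := by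
  by_cases hp : 1 ≤ p ∧ p ≤ 2*n-6
  · refine (dif_pos hp).trans (LinearMap.mem_ker.1 ((Submodule.span_le (p := LinearMap.ker
      ((LinearMap.proj (⟨p-1, by omega⟩ : Fin (2*n-6)) :
        (Fin (2*n-6) → ℝ) →ₗ[ℝ] ℝ).comp
        ((LinearMap.fst ℝ _ ℝ).comp (LinearMap.snd ℝ G2 (Hs n)))))).2 ?_ hx))
    rintro v (⟨rfl, -⟩ | ⟨rfl | rfl, -⟩ | ⟨rfl, -⟩ | ⟨q, -, -, rfl, rfl⟩ |
      ⟨rfl, -⟩)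
    all_goals simp [bY, bH, bE, bX, bEps, epsV, bEta, etaV]
    omega
  · exact coordEps_of_not_mem hp x

theorem coordEta_eq_zero_of_mem (hn : 4 ≤ n) {w : ℤ} {x : MT n (n-4)}
    (hx : (x : Gg n) ∈ gComp n (n-4) w) (hw : w ≠ 5 - 2*n) : coordEta x = 0 := by
  refine (Submodule.span_le (p := LinearMap.ker
    ((LinearMap.snd ℝ _ ℝ).comp (LinearMap.snd ℝ G2 (Hs n))))).2 ?_ hx
  rintro v (⟨rfl, -⟩ | ⟨rfl | rfl, -⟩ | ⟨rfl, -⟩ | ⟨p, -, -, rfl, -⟩ |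
    ⟨rfl, rfl⟩)
  all_goals first | exact absurd (by omega) hw | simp [bY, bH, bE, bX, bEps, epsV]

theorem coe_mem_gComp_of_coords (hn : 4 ≤ n) {w : ℤ} {x : MT n (n-4)}
    (hX : w ≠ -1 → coordX x = 0)
    (hEps : ∀ p, 1 ≤ p → p ≤ 2*n-6 → w ≠ -p → coordEps p x = 0)
    (hEta : w ≠ 5 - 2*n → coordEta x = 0) : (x : Gg n) ∈ gComp n (n-4) w := by
  rw [eq_sum_basis x]
  simp only [Submodule.coe_add, Submodule.coe_smul, Submodule.coe_sum]
  refine add_mem (add_mem ?_ (Submodule.sum_mem _ fun p hp => ?_)) ?_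
  · by_cases hw : w = -1
    · exact Submodule.smul_mem _ _ (hw ▸ coe_eX_mem)
    · simp [hX hw]
  · obtain ⟨hp1, hpN⟩ := Finset.mem_Icc.1 hp
    by_cases hw : w = -p
    · exact Submodule.smul_mem _ _ (hw ▸ coe_eEps_mem hn hp1 hpN)
    · simp [hEps p hp1 hpN hw]
  · by_cases hw : w = 5 - 2*n
    · exact Submodule.smul_mem _ _ (hw ▸ coe_eEta_mem hn)
    · simp [hEta hw]

theorem eq_of_mem_neg_one (hn : 4 ≤ n) {x : MT n (n-4)} (hx : (x : Gg n) ∈ gComp n (n-4) (-1)) :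
    x = coordX x • eX n + coordEps 1 x • eEps n 1 := by
  refine ext_coords (by simp) (fun q hq1 hqN => ?_) ?_
  · by_cases hq : q = 1
    · subst hq
      simp [show 1 ≤ 2*n-6 by omega]
    · simp [hq, coordEps_eq_zero_of_mem hn hx (p := q) (by omega)]
  · simp [coordEta_eq_zero_of_mem hn hx (by omega)]

theorem eq_smul_eEps_of_mem (hn : 4 ≤ n) {p : ℕ} (hp : 2 ≤ p) (hpN : p ≤ 2*n-6)
    {x : MT n (n-4)} (hx : (x : Gg n) ∈ gComp n (n-4) (-p)) : x = coordEps p x • eEps n p := by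
  refine ext_coords (by simp [coordX_eq_zero_of_mem hx (by omega)]) (fun q hq1 hqN => ?_)
    (by simp [coordEta_eq_zero_of_mem hn hx (by omega)])
  by_cases hq : q = p
  · subst hq
    simp [hq1, hqN]
  · simp [hq, coordEps_eq_zero_of_mem hn hx (p := q) (by omega)]

end Grading

section GradingDerivations

variable {n : ℕ}

/-- The restriction to `m` of `(a/2) ad H + (d + (2n-7)a/2) ad E`. -/
def gradDer (a d : ℝ) (y : MT n (n-4)) : MT n (n-4) :=
  ⟨(![0, 0, 0, a * (y : Gg n).1 3],
    (fun i => ((i : ℝ) * a + d) * (y : Gg n).2.1 i, ((2*n - 7) * a + 2*d) * (y : Gg n).2.2)),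
   rfl, rfl, rfl, fun _ h => absurd h (by omega)⟩

@[simp] theorem coordX_gradDer (a d : ℝ) (y : MT n (n-4)) :
    coordX (gradDer a d y) = a * coordX y := rfl

@[simp] theorem coordEps_gradDer (a d : ℝ) (p : ℕ) (y : MT n (n-4)) :
    coordEps p (gradDer a d y) = ((p - 1 : ℝ) * a + d) * coordEps p y := by
  simp only [coordEps, epsCoef, gradDer, LinearMap.coe_mk, AddHom.coe_mk]
  split_ifs with h
  · rw [Nat.cast_sub h.1, Nat.cast_one]
  · rw [mul_zero]

@[simp] theorem coordEta_gradDer (a d : ℝ) (y : MT n (n-4)) :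
    coordEta (gradDer a d y) = ((2*n - 7) * a + 2*d) * coordEta y := rfl

theorem gradDer_eX (a d : ℝ) : gradDer a d (eX n) = a • eX n :=
  ext_coords (by simp) (fun _ _ _ => by simp) (by simp)

theorem gradDer_eEps (a d : ℝ) (p : ℕ) :
    gradDer a d (eEps n p) = ((p - 1 : ℝ) * a + d) • eEps n p := by
  refine ext_coords (by simp) (fun q _ _ => ?_) (by simp)
  simp only [coordEps_gradDer, coordEps_eEps, map_smul, smul_eq_mul]
  split_ifs with h
  · rw [h.1]
  · rw [mul_zero, mul_zero]

theorem gradDer_eEta (a d : ℝ) : gradDer a d (eEta n) = ((2*n - 7) * a + 2*d) • eEta n :=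
  ext_coords (by simp) (fun _ _ _ => by simp) (by simp)

theorem smul_gradDer (c a d : ℝ) : c • gradDer (n := n) a d = gradDer (c * a) (c * d) := by
  funext y
  refine ext_coords ?_ (fun _ _ _ => ?_) ?_ <;>
    simp only [Pi.smul_apply, map_smul, smul_eq_mul, coordX_gradDer, coordEps_gradDer,
      coordEta_gradDer] <;> ring

theorem gradDer_add_gradDer (a d a' d' : ℝ) :
    gradDer (n := n) a d + gradDer a' d' = gradDer (a + a') (d + d') := by
  funext y
  refine ext_coords ?_ (fun _ _ _ => ?_) ?_ <;>
    simp only [Pi.add_apply, map_add, coordX_gradDer, coordEps_gradDer, coordEta_gradDer] <;> ring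

theorem isLinearMap_gradDer (a d : ℝ) : IsLinearMap ℝ (gradDer (n := n) a d) where
  map_add x y := by
    refine ext_coords ?_ (fun _ _ _ => ?_) ?_ <;>
      simp only [map_add, coordX_gradDer, coordEps_gradDer, coordEta_gradDer] <;> ring
  map_smul c x := by
    refine ext_coords ?_ (fun _ _ _ => ?_) ?_ <;>
      simp only [map_smul, smul_eq_mul, coordX_gradDer, coordEps_gradDer, coordEta_gradDer] <;> ring

theorem gradDer_mBrM (a d : ℝ) (x y : MT n (n-4)) :
    gradDer a d (mBrM n (n-4) x y)
      = mBrM n (n-4) (gradDer a d x) y + mBrM n (n-4) x (gradDer a d y) := by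
  refine ext_coords (by simp [coordX_mBrM]) (fun p hp1 hpN => ?_) ?_
  · simp only [coordEps_gradDer, map_add, coordEps_mBrM hp1 hpN, coordX_gradDer,
      Nat.cast_sub hp1, Nat.cast_one]
    ring
  · simp only [coordEta_gradDer, map_add, coordEta_mBrM, coordEps_gradDer, Finset.mul_sum,
      ← Finset.sum_add_distrib]
    refine Finset.sum_congr rfl fun r hr => ?_
    rw [Finset.mem_range] at hr
    rw [Nat.cast_sub (by omega : r ≤ 2*n-6), Nat.cast_sub (by omega : 6 ≤ 2*n)]
    push_cast
    ring

theorem isDer0_gradDer (hn : 4 ≤ n) (a d : ℝ) : IsDer0 n (gradDer a d) := by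
  refine ⟨⟨(isLinearMap_gradDer a d).map_add, (isLinearMap_gradDer a d).map_smul⟩,
    fun w x hx => coe_mem_gComp_of_coords hn ?_ ?_ ?_, gradDer_mBrM a d⟩
  · exact fun hw => by simp [coordX_eq_zero_of_mem hx hw]
  · exact fun p _ _ hw => by simp [coordEps_eq_zero_of_mem hn hx hw]
  · exact fun hw => by simp [coordEta_eq_zero_of_mem hn hx hw]

end GradingDerivations

namespace IsDer0

variable {n : ℕ} {D : MT n (n-4) → MT n (n-4)}

theorem isLinearMap (hD : IsDer0 n D) : IsLinearMap ℝ D := ⟨hD.1.1, hD.1.2⟩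

theorem map_mBrM (hD : IsDer0 n D) (x y : MT n (n-4)) :
    D (mBrM n (n-4) x y) = mBrM n (n-4) (D x) y + mBrM n (n-4) x (D y) :=
  hD.2.2 x y

theorem exists_apply_of_mem_neg_one (hn : 4 ≤ n) (hD : IsDer0 n D) {x : MT n (n-4)}
    (hx : (x : Gg n) ∈ gComp n (n-4) (-1)) : ∃ a b : ℝ, D x = a • eX n + b • eEps n 1 :=
  ⟨_, _, eq_of_mem_neg_one hn (hD.2.1 _ _ hx)⟩

theorem exists_apply_eEps_one (hn : 6 ≤ n) (hD : IsDer0 n D) :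
    ∃ d : ℝ, D (eEps n 1) = d • eEps n 1 := by
  obtain ⟨a, b, hX⟩ := hD.exists_apply_of_mem_neg_one (by omega) coe_eX_mem
  obtain ⟨c, d, h1⟩ := hD.exists_apply_of_mem_neg_one (by omega)
    (coe_eEps_one_mem (by omega))
  have h2 : D (eEps n 2) = (a + d) • eEps n 2 := by
    have := hD.map_mBrM (eX n) (eEps n 1)
    rw [mBrM_eX_eEps le_rfl, hX, h1] at this
    simpa [mBrM_add_left, mBrM_add_right, mBrM_smul_left, mBrM_smul_right, mBrM_eX_eX,
      mBrM_eX_eEps, mBrM_eEps_eEps_of_add_ne (n := n) (p := 1) (q := 1) (by omega), add_smul]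
      using this
  have h3 := hD.map_mBrM (eEps n 1) (eEps n 2)
  rw [mBrM_eEps_eEps_of_add_ne (by omega), hD.isLinearMap.map_zero, h1, h2] at h3
  have hc : c = 0 := by
    have h3' := congrArg (coordEps 3) h3
    simp only [mBrM_add_left, mBrM_smul_left, mBrM_smul_right, mBrM_eX_eEps (p := 2) (by omega),
      mBrM_eEps_eEps_of_add_ne (n := n) (p := 1) (q := 2) (by omega)] at h3'
    simpa [show 3 ≤ 2*n-6 by omega] using h3'.symm
  exact ⟨d, by simpa [hc] using h1⟩

theorem apply_eEps (hn : 6 ≤ n) (hD : IsDer0 n D) {a b d : ℝ}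
    (hX : D (eX n) = a • eX n + b • eEps n 1) (h1 : D (eEps n 1) = d • eEps n 1) :
    ∀ p, 1 ≤ p → p ≤ 2*n-6 → D (eEps n p) = ((p - 1 : ℝ) * a + d) • eEps n p := by
  intro p hp
  induction p, hp using Nat.le_induction with
  | base => exact fun _ => by simpa using h1
  | succ p hp ih =>
    intro hpN
    have := hD.map_mBrM (eX n) (eEps n p)
    rw [mBrM_eX_eEps hp, hX, ih (by omega), mBrM_add_left, mBrM_smul_left, mBrM_smul_left,
      mBrM_smul_right, mBrM_eX_eEps hp, mBrM_eEps_eEps_of_add_ne (by omega)] at this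
    rw [this]
    push_cast
    module

theorem exists_eq_gradDer (hn : 6 ≤ n) (hD : IsDer0 n D) : ∃ a d : ℝ, D = gradDer a d := by
  obtain ⟨a, b, hX⟩ := hD.exists_apply_of_mem_neg_one (by omega) coe_eX_mem
  obtain ⟨d, h1⟩ := hD.exists_apply_eEps_one hn
  have hEps := hD.apply_eEps hn hX h1
  have hTop := hEps (2*n-6) (by omega) le_rfl
  have hb : b = 0 := by
    have := hD.map_mBrM (eX n) (eEps n (2*n-6))
    rw [mBrM_eX_eEps (by omega), eEps_eq_zero_of_lt (by omega), hD.isLinearMap.map_zero, hX, hTop,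
      mBrM_add_left, mBrM_smul_left, mBrM_smul_left, mBrM_smul_right, mBrM_eX_eEps (by omega),
      eEps_eq_zero_of_lt (by omega), mBrM_eEps_eEps_of_add_eq le_rfl (by omega) (by omega)] at this
    simpa using congrArg coordEta this
  have hEta : D (eEta n) = ((2*n - 7) * a + 2*d) • eEta n := by
    have := hD.map_mBrM (eEps n 1) (eEps n (2*n-6))
    rw [mBrM_eEps_eEps_of_add_eq le_rfl (by omega) (by omega), h1, hTop, mBrM_smul_left,
      mBrM_smul_right, mBrM_eEps_eEps_of_add_eq le_rfl (by omega) (by omega),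
      hD.isLinearMap.map_smul, pow_one, smul_smul, smul_smul, ← add_smul] at this
    rw [neg_one_smul, neg_eq_iff_eq_neg, ← neg_smul] at this
    rw [this, cast_two_mul_sub_six (by omega)]
    congr 1
    ring
  refine ⟨a, d, isLinearMap_ext_basis hD.isLinearMap (isLinearMap_gradDer a d) ?_ ?_ ?_⟩
  · simp [hX, hb, gradDer_eX]
  · exact fun p hp1 hpN => by rw [hEps p hp1 hpN, gradDer_eEps]
  · rw [hEta, gradDer_eEta]

end IsDer0

section UY

variable {n : ℕ}

@[simp] theorem coordX_uYm (x : MT n (n-4)) : coordX (uYm n x) = 0 := rfl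

@[simp] theorem coordEta_uYm (x : MT n (n-4)) : coordEta (uYm n x) = 0 := by
  simp [coordEta, uYm, ptoM, Pm, phi]

@[simp] theorem coordEps_uYm (p : ℕ) (x : MT n (n-4)) :
    coordEps p (uYm n x) = p * (2*n - 6 - p) * coordEps (p+1) x := by
  rcases Nat.eq_zero_or_pos p with rfl | hp
  · simp [coordEps_of_not_mem]
  obtain ⟨q, rfl⟩ : ∃ q, p = q + 1 := ⟨p - 1, by omega⟩
  simp only [coordEps, epsCoef, uYm, ptoM, Pm, phi, LinearMap.coe_mk, AddHom.coe_mk,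
    Nat.add_sub_cancel]
  by_cases hq : q + 1 ≤ 2*n-6
  · rw [dif_pos ⟨by omega, hq⟩, if_pos (by omega)]
    by_cases hq' : q + 1 < 2*n-6
    · rw [dif_pos hq', dif_pos (show 1 ≤ q + 1 + 1 ∧ q + 1 + 1 ≤ 2*n-6 by omega)]
      simp only [Matrix.cons_val_zero, Matrix.cons_val_one, Matrix.cons_val_two,
        Matrix.cons_val_three, Matrix.head_cons, Matrix.tail_cons, zero_mul, one_mul, zero_add,
        Nat.cast_add, Nat.cast_one]
      rw [show (2 * n - 6 - (q + 1) : ℝ) = 2 * n - 7 - q by ring]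
    · rw [dif_neg hq', dif_neg (show ¬(1 ≤ q + 1 + 1 ∧ q + 1 + 1 ≤ 2*n-6) by omega)]
      simp
  · rw [dif_neg (by omega), dif_neg (by omega)]
    simp

theorem ptoM_gBr_bH (y : MT n (n-4)) :
    ptoM n (n-4) (gBr n (bH n) y) = gradDer 2 (7 - 2*n) y := by
  obtain ⟨hy0, hy1, hy2, -⟩ := y.2
  refine ext_coords ?_ (fun p hp1 hpN => ?_) ?_
  · rw [coordX_ptoM, coordX_gradDer]
    simp [gBr, gl2Br, bH, hy1, coordX]
  · rw [coordEps_ptoM, coordEps_gradDer]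
    simp only [gBr, phi, heisBr, bH, coordEps, epsCoef, dif_pos (And.intro hp1 hpN)]
    simp only [Matrix.cons_val_one, Matrix.cons_val_zero, Matrix.cons_val, one_mul, zero_mul,
      add_zero, mul_zero, mul_dite, dite_eq_ite, ite_self, Prod.fst_zero, Pi.zero_apply,
      Prod.snd_zero, Prod.mk_sub_mk, sub_self, Finset.sum_const_zero, Prod.mk_add_mk, Pi.sub_apply,
      Nat.cast_sub hp1, Nat.cast_one, hy0, LinearMap.coe_mk, AddHom.coe_mk]
    ring
  · rw [coordEta_ptoM, coordEta_gradDer]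
    simp only [gBr, bH, phi, heisBr, Matrix.cons_val_one, Matrix.cons_val_zero, Matrix.cons_val,
      one_mul, zero_mul, add_zero, mul_dite, mul_zero, dite_eq_ite, ite_self, Prod.fst_zero,
      Pi.zero_apply, hy2, Prod.snd_zero, Prod.mk_sub_mk, sub_self, Finset.sum_const_zero,
      Prod.mk_add_mk, coordEta, LinearMap.coe_mk, AddHom.coe_mk]
    ring

theorem uY0_eq_gradDer (x : MT n (n-4)) :
    uY0 n x = gradDer (-2 * coordX x) ((2*n - 7) * coordX x) := by
  funext y
  rw [uY0, ptoM_gBr_bH, show (-(x : Gg n).1 3) • gradDer 2 (7 - 2*n) y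
    = (-coordX x • gradDer (n := n) 2 (7 - 2*n)) y from rfl, smul_gradDer]
  congr 1 <;> ring

theorem uY0_eX : uY0 n (eX n) = gradDer (-2) (2*n - 7) := by
  rw [uY0_eq_gradDer, coordX_eX, mul_one, mul_one]

theorem uY0_eq_zero {x : MT n (n-4)} (hx : coordX x = 0) : uY0 n x = 0 := by
  rw [uY0_eq_gradDer, hx, mul_zero, mul_zero]
  exact funext fun y => ext_coords (by simp) (fun _ _ _ => by simp) (by simp)

theorem isLinearMap_uYm : IsLinearMap ℝ (uYm n) where
  map_add x y := ext_coords (by simp) (fun _ _ _ => by simp only [coordEps_uYm, map_add]; ring)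
    (by simp)
  map_smul c x := ext_coords (by simp)
    (fun _ _ _ => by simp only [coordEps_uYm, map_smul, smul_eq_mul]; ring) (by simp)

theorem uYm_eEps {p : ℕ} (hp1 : 1 ≤ p) (hpN : p ≤ 2*n-6) :
    uYm n (eEps n p) = ((p - 1 : ℝ) * (2*n - 5 - p)) • eEps n (p-1) := by
  obtain ⟨q, rfl⟩ : ∃ q, p = q + 1 := ⟨p - 1, by omega⟩
  refine ext_coords (by simp) (fun r _ _ => ?_) (by simp)
  simp only [coordEps_uYm, coordEps_eEps, map_smul, smul_eq_mul, Nat.add_sub_cancel]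
  by_cases hr : r = q
  · subst hr
    rw [if_pos ⟨rfl, by omega, hpN⟩, if_pos ⟨rfl, by omega, by omega⟩]
    push_cast
    ring
  · rw [if_neg (by omega), if_neg (by omega), mul_zero, mul_zero]

-- `φ(Y)` is skew for the form `heisBr`: after reindexing, the two sums telescope.
theorem coordEta_mBrM_uYm (x y : MT n (n-4)) :
    coordEta (mBrM n (n-4) (uYm n x) y) = -coordEta (mBrM n (n-4) x (uYm n y)) := by
  set T : ℕ → ℝ := fun r =>
    (-1) ^ r * r * (2*n - 6 - r) * coordEps (r+1) x * coordEps (2*n-5-r) y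
  have hterm : ∀ r ∈ Finset.range (2*n-6),
      (-1) ^ (r+1) * coordEps (r+1) (uYm n x) * coordEps (2*n-6-r) y
        + (-1) ^ (r+1) * coordEps (r+1) x * coordEps (2*n-6-r) (uYm n y) = T (r+1) - T r := by
    intro r hr
    rw [Finset.mem_range] at hr
    simp only [T, coordEps_uYm, show 2*n-6-r+1 = 2*n-5-r by omega,
      show 2*n-5-(r+1) = 2*n-6-r by omega,
      Nat.cast_sub (show r ≤ 2*n-6 by omega), Nat.cast_sub (show 6 ≤ 2*n by omega)]
    push_cast
    ring
  rw [eq_neg_iff_add_eq_zero, coordEta_mBrM, coordEta_mBrM, ← Finset.sum_add_distrib,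
    Finset.sum_congr rfl hterm, Finset.sum_range_sub]
  simp [T, coordEps_of_not_mem (n := n) (p := 2*n-6+1) (by omega) x]

theorem uYm_mBrM (x y : MT n (n-4)) :
    uYm n (mBrM n (n-4) x y)
      = mBrM n (n-4) (uYm n x) y + uY0 n x y + mBrM n (n-4) x (uYm n y) - uY0 n y x := by
  refine ext_coords ?_ (fun p hp1 hpN => ?_) ?_
  · simp only [map_add, map_sub, coordX_mBrM, coordX_uYm, uY0_eq_gradDer, coordX_gradDer]
    ring
  · have hp : (p : ℝ) * (2*n - 6 - p) * coordEps (p+1) (mBrM n (n-4) x y)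
        = p * (2*n - 6 - p) * (coordX x * coordEps p y - coordX y * coordEps p x) := by
      rcases lt_or_eq_of_le hpN with hp | rfl
      · rw [coordEps_mBrM (p := p+1) (by omega) hp, Nat.add_sub_cancel]
      · rw [cast_two_mul_sub_six (by omega)]
        ring
    simp only [map_add, map_sub, coordEps_uYm, hp, coordEps_mBrM hp1 hpN, uY0_eq_gradDer,
      coordEps_gradDer, coordX_uYm, Nat.sub_add_cancel hp1, Nat.cast_sub hp1, Nat.cast_one]
    ring
  · simp only [map_add, map_sub, coordEta_uYm, coordEta_mBrM_uYm, uY0_eq_gradDer, coordEta_gradDer]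
    ring

theorem isLinearMap_uY0 : IsLinearMap ℝ (uY0 n) where
  map_add x x' := by
    simp only [uY0_eq_gradDer, map_add, gradDer_add_gradDer]
    congr 1 <;> ring
  map_smul c x := by
    simp only [uY0_eq_gradDer, map_smul, smul_gradDer, smul_eq_mul]
    congr 1 <;> ring

theorem isG1_uY (hn : 6 ≤ n) : IsG1 n (uYm n, uY0 n) := by
  refine ⟨⟨isLinearMap_uYm.map_add, isLinearMap_uYm.map_smul⟩, isLinearMap_uY0.map_add,
    isLinearMap_uY0.map_smul, fun x => ?_, fun x hx => ?_,
    fun j hj x hx => ⟨?_, uY0_eq_zero (coordX_eq_zero_of_mem hx (by omega))⟩,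
    uYm_mBrM, fun x y => uY0_eq_zero (coordX_mBrM x y)⟩
  · rw [show (uYm n, uY0 n).2 x = _ from uY0_eq_gradDer x]
    exact isDer0_gradDer (by omega) _ _
  · refine ext_coords (by simp) (fun p _ _ => ?_) (by simp)
    simp [coordEps_eq_zero_of_mem (p := p + 1) (by omega) hx (by omega)]
  · refine coe_mem_gComp_of_coords (by omega) (fun _ => by simp) (fun p _ _ hp => ?_)
      (fun _ => by simp)
    simp [coordEps_eq_zero_of_mem (p := p + 1) (by omega) hx (by omega)]

theorem uY_ne_zero (hn : 6 ≤ n) : (uYm n, uY0 n) ≠ 0 := by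
  intro h
  have h1 : uY0 n (eX n) (eEps n 1) = 0 := by rw [show uY0 n = 0 from congrArg Prod.snd h]; rfl
  rw [uY0_eX, gradDer_eEps, smul_eq_zero, Nat.cast_one] at h1
  have : (6 : ℝ) ≤ n := by exact_mod_cast hn
  exact h1.elim (fun h => by linarith) (eEps_ne_zero le_rfl (by omega))

end UY

namespace IsG1

variable {n : ℕ} {u : (MT n (n-4) → MT n (n-4)) × (MT n (n-4) → MT n (n-4) → MT n (n-4))}

theorem isLinearMap_fst (hu : IsG1 n u) : IsLinearMap ℝ u.1 := ⟨hu.1.1, hu.1.2⟩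

theorem isLinearMap_snd (hu : IsG1 n u) : IsLinearMap ℝ u.2 := ⟨hu.2.1, hu.2.2.1⟩

theorem isDer0_snd (hu : IsG1 n u) (x : MT n (n-4)) : IsDer0 n (u.2 x) := hu.2.2.2.1 x

theorem fst_mem_of_mem (hu : IsG1 n u) {j : ℤ} (hj : j ≤ -2) {x : MT n (n-4)}
    (hx : (x : Gg n) ∈ gComp n (n-4) j) : (u.1 x : Gg n) ∈ gComp n (n-4) (j + 1) :=
  (hu.2.2.2.2.2.1 j hj x hx).1

theorem snd_eq_zero_of_mem (hu : IsG1 n u) {j : ℤ} (hj : j ≤ -2) {x : MT n (n-4)}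
    (hx : (x : Gg n) ∈ gComp n (n-4) j) : u.2 x = 0 :=
  (hu.2.2.2.2.2.1 j hj x hx).2

theorem fst_mBrM (hu : IsG1 n u) (x y : MT n (n-4)) :
    u.1 (mBrM n (n-4) x y)
      = mBrM n (n-4) (u.1 x) y + u.2 x y + mBrM n (n-4) x (u.1 y) - u.2 y x :=
  hu.2.2.2.2.2.2.1 x y

theorem fst_eX (hu : IsG1 n u) : u.1 (eX n) = 0 := hu.2.2.2.2.1 _ coe_eX_mem

theorem fst_eEps_one (hn : 4 ≤ n) (hu : IsG1 n u) : u.1 (eEps n 1) = 0 :=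
  hu.2.2.2.2.1 _ (coe_eEps_one_mem hn)

theorem snd_eEps_of_two_le (hn : 4 ≤ n) (hu : IsG1 n u) {q : ℕ} (hq : 2 ≤ q)
    (hqN : q ≤ 2*n-6) : u.2 (eEps n q) = 0 :=
  hu.snd_eq_zero_of_mem (by omega) (coe_eEps_mem hn (by omega) hqN)

theorem snd_eEta (hn : 4 ≤ n) (hu : IsG1 n u) : u.2 (eEta n) = 0 :=
  hu.snd_eq_zero_of_mem (by omega) (coe_eEta_mem hn)

theorem exists_fst_eEps (hn : 4 ≤ n) (hu : IsG1 n u) {q : ℕ} (hq : 3 ≤ q)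
    (hqN : q ≤ 2*n-6) :
    ∃ c : ℝ, u.1 (eEps n q) = c • eEps n (q-1) := by
  have := hu.fst_mem_of_mem (by omega) (coe_eEps_mem hn (by omega) hqN)
  rw [show -(q : ℤ) + 1 = -((q - 1 : ℕ) : ℤ) by omega] at this
  exact ⟨_, eq_smul_eEps_of_mem hn (by omega) (by omega) this⟩

theorem snd_eEps_one (hn : 6 ≤ n) (hu : IsG1 n u) : u.2 (eEps n 1) = 0 := by
  obtain ⟨a, d, hD⟩ := (hu.isDer0_snd (eEps n 1)).exists_eq_gradDer hn
  have key : ∀ q, 3 ≤ q → q < 2*n-6 → (q - 1 : ℝ) * a + d = 0 := by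
    intro q hq hqN
    obtain ⟨c, hc⟩ := hu.exists_fst_eEps (by omega) hq hqN.le
    have h := hu.fst_mBrM (eEps n 1) (eEps n q)
    rw [mBrM_eEps_eEps_of_add_ne (by omega), hu.isLinearMap_fst.map_zero,
      hu.fst_eEps_one (by omega), mBrM_zero_left, hc, mBrM_smul_right,
      mBrM_eEps_eEps_of_add_ne (by omega), hu.snd_eEps_of_two_le (by omega) (by omega) hqN.le,
      hD, gradDer_eEps] at h
    have h' := congrArg (coordEps q) h
    simpa [show 1 ≤ q by omega, hqN.le] using h'.symm
  have h3 := key 3 le_rfl (by omega)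
  have h4 := key 4 (by norm_num) (by omega)
  simp only [Nat.cast_ofNat] at h3 h4
  obtain rfl : a = 0 := by linarith
  obtain rfl : d = 0 := by linarith
  rw [hD]
  exact funext fun y => ext_coords (by simp) (fun _ _ _ => by simp) (by simp)

theorem snd_eEps (hn : 6 ≤ n) (hu : IsG1 n u) {q : ℕ} (hq : 1 ≤ q) (hqN : q ≤ 2*n-6) :
    u.2 (eEps n q) = 0 := by
  rcases eq_or_lt_of_le hq with rfl | hq
  · exact hu.snd_eEps_one hn
  · exact hu.snd_eEps_of_two_le (by omega) hq hqN

theorem fst_eEta (hn : 6 ≤ n) (hu : IsG1 n u) : u.1 (eEta n) = 0 := by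
  obtain ⟨c, hc⟩ := hu.exists_fst_eEps (q := 2*n-6) (by omega) (by omega) le_rfl
  have h := hu.fst_mBrM (eEps n 1) (eEps n (2*n-6))
  rw [mBrM_eEps_eEps_of_add_eq le_rfl (by omega) (by omega), hu.isLinearMap_fst.map_smul,
    hu.fst_eEps_one (by omega), mBrM_zero_left, hu.snd_eEps_one hn, hc, mBrM_smul_right,
    mBrM_eEps_eEps_of_add_ne (by omega), hu.snd_eEps_of_two_le (by omega) (by omega) le_rfl] at h
  simpa using h

theorem fst_eEps_succ (hn : 6 ≤ n) (hu : IsG1 n u) {q : ℕ} (hq : 1 ≤ q) (hqN : q ≤ 2*n-6) :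
    u.1 (eEps n (q+1)) = u.2 (eX n) (eEps n q) + mBrM n (n-4) (eX n) (u.1 (eEps n q)) := by
  have h := hu.fst_mBrM (eX n) (eEps n q)
  rwa [mBrM_eX_eEps hq, hu.fst_eX, mBrM_zero_left, hu.snd_eEps hn hq hqN, zero_add,
    Pi.zero_apply, sub_zero] at h

theorem exists_snd_eX (hn : 6 ≤ n) (hu : IsG1 n u) :
    ∃ c : ℝ, u.2 (eX n) = c • uY0 n (eX n) := by
  obtain ⟨a, d, hD⟩ := (hu.isDer0_snd (eX n)).exists_eq_gradDer hn
  have h := hu.fst_mBrM (eX n) (eEta n)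
  rw [mBrM_eEta_right, hu.isLinearMap_fst.map_zero, hu.fst_eX, mBrM_zero_left, hD, gradDer_eEta,
    hu.fst_eEta hn, mBrM_zero_right, hu.snd_eEta (by omega)] at h
  have hk : (2*n - 7) * a + 2*d = 0 := by simpa using (congrArg coordEta h).symm
  refine ⟨-a/2, ?_⟩
  rw [hD, uY0_eX, smul_gradDer]
  congr 1 <;> linarith

theorem eq_smul_uY (hn : 6 ≤ n) (hu : IsG1 n u) : ∃ c : ℝ, u = c • (uYm n, uY0 n) := by
  obtain ⟨c, hc⟩ := hu.exists_snd_eX hn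
  have hY := isG1_uY hn
  have hYsucc : ∀ q, 1 ≤ q → q ≤ 2*n-6 → uYm n (eEps n (q+1))
      = uY0 n (eX n) (eEps n q) + mBrM n (n-4) (eX n) (uYm n (eEps n q)) :=
    fun q hq hqN => hY.fst_eEps_succ hn hq hqN
  have hEps : ∀ q, 1 ≤ q → q ≤ 2*n-6 → u.1 (eEps n q) = c • uYm n (eEps n q) := by
    intro q hq
    induction q, hq using Nat.le_induction with
    | base =>
      intro _
      rw [hu.fst_eEps_one (by omega), show uYm n (eEps n 1) = 0 from hY.fst_eEps_one (by omega),
        smul_zero]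
    | succ q hq ih =>
      intro hqN
      rw [hu.fst_eEps_succ hn hq (by omega), hYsucc q hq (by omega), hc, ih (by omega),
        mBrM_smul_right, smul_add]
      rfl
  refine ⟨c, Prod.ext ?_ ?_⟩
  · refine isLinearMap_ext_basis hu.isLinearMap_fst (hY.isLinearMap_fst.smul c) ?_ hEps ?_
    · simp [hu.fst_eX, show uYm n (eX n) = 0 from hY.fst_eX]
    · simp [hu.fst_eEta hn, show uYm n (eEta n) = 0 from hY.fst_eEta hn]
  · refine isLinearMap_ext_basis hu.isLinearMap_snd (hY.isLinearMap_snd.smul c) hc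
      (fun q hq hqN => ?_) ?_
    · simp [hu.snd_eEps hn hq hqN, show uY0 n (eEps n q) = 0 from hY.snd_eEps hn hq hqN]
    · simp [hu.snd_eEta (by omega), show uY0 n (eEta n) = 0 from hY.snd_eEta (by omega)]

end IsG1

namespace IsG2

variable {n : ℕ} {t : (MT n (n-4) → MT n (n-4)) × (MT n (n-4) → MT n (n-4) → MT n (n-4)) ×
  (MT n (n-4) → (MT n (n-4) → MT n (n-4)) × (MT n (n-4) → MT n (n-4) → MT n (n-4)))}

theorem isLinearMap_fst (ht : IsG2 n t) : IsLinearMap ℝ t.1 := ⟨ht.1.1, ht.1.2⟩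

theorem isLinearMap_snd_fst (ht : IsG2 n t) : IsLinearMap ℝ t.2.1 := ⟨ht.2.1, ht.2.2.1⟩

theorem isLinearMap_snd_snd (ht : IsG2 n t) : IsLinearMap ℝ t.2.2 :=
  ⟨ht.2.2.2.1, ht.2.2.2.2.1⟩

theorem isG1_snd_snd (ht : IsG2 n t) (x : MT n (n-4)) : IsG1 n (t.2.2 x) := ht.2.2.2.2.2.2.1 x

theorem of_mem_neg_one (ht : IsG2 n t) {x : MT n (n-4)} (hx : (x : Gg n) ∈ gComp n (n-4) (-1)) :
    t.1 x = 0 ∧ t.2.1 x = 0 :=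
  ht.2.2.2.2.2.2.2.1 x hx

theorem of_mem_neg_two (ht : IsG2 n t) {x : MT n (n-4)} (hx : (x : Gg n) ∈ gComp n (n-4) (-2)) :
    t.1 x = 0 ∧ t.2.2 x = 0 :=
  ht.2.2.2.2.2.2.2.2.1 x hx

theorem snd_eq_zero_of_mem (ht : IsG2 n t) {j : ℤ} (hj : j ≤ -3) {x : MT n (n-4)}
    (hx : (x : Gg n) ∈ gComp n (n-4) j) : t.2.1 x = 0 ∧ t.2.2 x = 0 :=
  (ht.2.2.2.2.2.2.2.2.2.1 j hj x hx).2

theorem fst_mBrM (ht : IsG2 n t) (x y : MT n (n-4)) :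
    t.1 (mBrM n (n-4) x y) = mBrM n (n-4) (t.1 x) y + t.2.1 x y + (t.2.2 x).1 y
      + mBrM n (n-4) x (t.1 y) - t.2.1 y x - (t.2.2 y).1 x :=
  ht.2.2.2.2.2.2.2.2.2.2.1 x y

theorem snd_fst_mBrM (ht : IsG2 n t) (x y : MT n (n-4)) :
    t.2.1 (mBrM n (n-4) x y) = fun z => (t.2.2 x).2 y z - (t.2.2 y).2 x z :=
  ht.2.2.2.2.2.2.2.2.2.2.2.1 x y

theorem of_eEps_one (hn : 4 ≤ n) (ht : IsG2 n t) : t.1 (eEps n 1) = 0 ∧ t.2.1 (eEps n 1) = 0 :=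
  ht.of_mem_neg_one (coe_eEps_one_mem hn)

theorem of_eEps_two (hn : 4 ≤ n) (ht : IsG2 n t) : t.1 (eEps n 2) = 0 ∧ t.2.2 (eEps n 2) = 0 :=
  ht.of_mem_neg_two (by simpa using coe_eEps_mem (p := 2) hn (by norm_num) (by omega))

theorem snd_eEps_of_three_le (hn : 4 ≤ n) (ht : IsG2 n t) {q : ℕ} (hq : 3 ≤ q)
    (hqN : q ≤ 2*n-6) :
    t.2.1 (eEps n q) = 0 ∧ t.2.2 (eEps n q) = 0 :=
  ht.snd_eq_zero_of_mem (by omega) (coe_eEps_mem hn (by omega) hqN)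

theorem snd_eEta (hn : 4 ≤ n) (ht : IsG2 n t) : t.2.1 (eEta n) = 0 ∧ t.2.2 (eEta n) = 0 :=
  ht.snd_eq_zero_of_mem (by omega) (coe_eEta_mem hn)

theorem snd_fst_eEps_two (hn : 6 ≤ n) (ht : IsG2 n t) :
    t.2.1 (eEps n 2) = fun z => -(t.2.2 (eEps n 1)).2 (eX n) z := by
  rw [← mBrM_eX_eEps le_rfl, ht.snd_fst_mBrM, (ht.isG1_snd_snd (eX n)).snd_eEps_one hn]
  simp

theorem snd_snd_eEps_one (hn : 6 ≤ n) (ht : IsG2 n t) : t.2.2 (eEps n 1) = 0 := by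
  obtain ⟨γ, hγ⟩ := (ht.isG1_snd_snd (eEps n 1)).eq_smul_uY hn
  have h := ht.fst_mBrM (eEps n 1) (eEps n 2)
  rw [mBrM_eEps_eEps_of_add_ne (by omega), ht.isLinearMap_fst.map_zero,
    (ht.of_eEps_one (by omega)).1, (ht.of_eEps_one (by omega)).2,
    (ht.of_eEps_two (by omega)).1, (ht.of_eEps_two (by omega)).2, ht.snd_fst_eEps_two hn, hγ] at h
  simp only [mBrM_zero_left, mBrM_zero_right, Pi.zero_apply, Prod.fst_zero, Prod.smul_fst,
    Prod.smul_snd, Pi.smul_apply, uYm_eEps (n := n) (p := 2) (by norm_num) (by omega), uY0_eX,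
    gradDer_eEps, Nat.add_one_sub_one] at h
  have h2 : (2 * (2*n - 7) * γ) • eEps n 1 = 0 := by linear_combination (norm := module) -h
  have : (6 : ℝ) ≤ n := by exact_mod_cast hn
  obtain rfl : γ = 0 := by
    simpa [eEps_ne_zero (n := n) le_rfl (by omega), show (2 * n - 7 : ℝ) ≠ 0 by linarith]
      using h2
  rw [hγ, zero_smul]

theorem snd_fst_eEps (hn : 6 ≤ n) (ht : IsG2 n t) {q : ℕ} (hq : 2 ≤ q) (hqN : q ≤ 2*n-6) :
    t.2.1 (eEps n q) = 0 := by
  rcases eq_or_lt_of_le hq with rfl | hq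
  · rw [ht.snd_fst_eEps_two hn, ht.snd_snd_eEps_one hn]
    funext z
    simp
  · exact (ht.snd_eEps_of_three_le (by omega) hq hqN).1

theorem snd_snd_eEps (hn : 6 ≤ n) (ht : IsG2 n t) {q : ℕ} (hq : 2 ≤ q) (hqN : q ≤ 2*n-6) :
    t.2.2 (eEps n q) = 0 := by
  rcases eq_or_lt_of_le hq with rfl | hq
  · exact (ht.of_eEps_two (by omega)).2
  · exact (ht.snd_eEps_of_three_le (by omega) hq hqN).2

theorem fst_eEps_succ (hn : 6 ≤ n) (ht : IsG2 n t) {q : ℕ} (hq : 2 ≤ q) (hqN : q ≤ 2*n-6) :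
    t.1 (eEps n (q+1)) = (t.2.2 (eX n)).1 (eEps n q) + mBrM n (n-4) (eX n) (t.1 (eEps n q)) := by
  have h := ht.fst_mBrM (eX n) (eEps n q)
  rw [mBrM_eX_eEps (by omega), (ht.of_mem_neg_one coe_eX_mem).1, (ht.of_mem_neg_one coe_eX_mem).2,
    ht.snd_fst_eEps hn hq hqN, ht.snd_snd_eEps hn hq hqN] at h
  simpa using h

theorem exists_fst_eEps (hn : 6 ≤ n) (ht : IsG2 n t) {γ : ℝ}
    (hX : t.2.2 (eX n) = γ • (uYm n, uY0 n)) :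
    ∀ q, 3 ≤ q → q ≤ 2*n-6 →
      ∃ κ : ℝ, 0 ≤ κ ∧ t.1 (eEps n q) = (γ * κ) • eEps n (q-2) := by
  have hstep : ∀ q, 2 ≤ q → q ≤ 2*n-6 → t.1 (eEps n (q+1))
      = γ • uYm n (eEps n q) + mBrM n (n-4) (eX n) (t.1 (eEps n q)) :=
    fun q hq hqN => by rw [ht.fst_eEps_succ hn hq hqN, hX]; rfl
  have hn' : (6 : ℝ) ≤ n := by exact_mod_cast hn
  intro q hq
  induction q, hq using Nat.le_induction with
  | base =>
    intro _
    refine ⟨2*n - 7, by linarith, ?_⟩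
    rw [hstep 2 le_rfl (by omega), (ht.of_eEps_two (by omega)).1, mBrM_zero_right, add_zero,
      uYm_eEps (by norm_num) (by omega), smul_smul]
    congr 1
    push_cast
    ring
  | succ q hq ih =>
    intro hqN
    obtain ⟨κ, hκ, hq'⟩ := ih (by omega)
    have hqR : (q : ℝ) + 7 ≤ 2*n := by exact_mod_cast (by omega : q + 7 ≤ 2*n)
    have hq3 : (3 : ℝ) ≤ q := by exact_mod_cast hq
    refine ⟨(q - 1) * (2*n - 5 - q) + κ, by nlinarith, ?_⟩
    rw [hstep q (by omega) (by omega), hq', mBrM_smul_right, mBrM_eX_eEps (by omega),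
      uYm_eEps (by omega) (by omega), smul_smul, show q - 2 + 1 = q - 1 by omega,
      show q + 1 - 2 = q - 1 by omega, ← add_smul]
    congr 1
    ring

theorem snd_snd_eX (hn : 6 ≤ n) (ht : IsG2 n t) : t.2.2 (eX n) = 0 := by
  obtain ⟨γ, hγ⟩ := (ht.isG1_snd_snd (eX n)).eq_smul_uY hn
  obtain ⟨κ, hκ, hN⟩ := ht.exists_fst_eEps hn hγ (2*n-6) (by omega) le_rfl
  have h := ht.fst_eEps_succ hn (q := 2*n-6) (by omega) le_rfl
  rw [eEps_eq_zero_of_lt (by omega), ht.isLinearMap_fst.map_zero, hγ, hN, mBrM_smul_right,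
    mBrM_eX_eEps (by omega), show 2*n-6-2+1 = 2*n-6-1 by omega, Prod.smul_fst, Pi.smul_apply] at h
  dsimp only at h
  rw [uYm_eEps (by omega) le_rfl, cast_two_mul_sub_six (by omega), smul_smul, ← add_smul,
    ← mul_add] at h
  have hn' : (6 : ℝ) ≤ n := by exact_mod_cast hn
  have hpos : 0 < (2*n - 6 - 1) * (2*n - 5 - (2*n - 6)) + κ := by linarith
  obtain rfl : γ = 0 := (mul_eq_zero.1 ((smul_eq_zero.1 h.symm).resolve_right
    (eEps_ne_zero (by omega) (by omega)))).resolve_right hpos.ne'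
  rw [hγ, zero_smul]

theorem fst_eEps (hn : 6 ≤ n) (ht : IsG2 n t) {q : ℕ} (hq : 2 ≤ q) (hqN : q ≤ 2*n-6) :
    t.1 (eEps n q) = 0 := by
  rcases eq_or_lt_of_le hq with rfl | hq
  · exact (ht.of_eEps_two (by omega)).1
  · obtain ⟨κ, -, h⟩ :=
      ht.exists_fst_eEps hn (γ := 0) (by rw [ht.snd_snd_eX hn, zero_smul]) q hq hqN
    rw [h, zero_mul, zero_smul]

theorem fst_eEta (hn : 6 ≤ n) (ht : IsG2 n t) : t.1 (eEta n) = 0 := by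
  have h := ht.fst_mBrM (eEps n 1) (eEps n (2*n-6))
  rw [mBrM_eEps_eEps_of_add_eq le_rfl (by omega) (by omega), ht.isLinearMap_fst.map_smul,
    (ht.of_eEps_one (by omega)).1, (ht.of_eEps_one (by omega)).2, ht.snd_snd_eEps_one hn,
    ht.fst_eEps hn (by omega) le_rfl, ht.snd_fst_eEps hn (by omega) le_rfl,
    ht.snd_snd_eEps hn (by omega) le_rfl] at h
  simpa using h

theorem eq_zero (hn : 6 ≤ n) (ht : IsG2 n t) : t = 0 := by
  have hEps1 := ht.of_eEps_one (by omega)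
  refine Prod.ext (isLinearMap_eq_zero_of_basis ht.isLinearMap_fst (ht.of_mem_neg_one coe_eX_mem).1
      (fun q hq hqN => ?_) (ht.fst_eEta hn))
    (Prod.ext (isLinearMap_eq_zero_of_basis ht.isLinearMap_snd_fst (ht.of_mem_neg_one coe_eX_mem).2
      (fun q hq hqN => ?_) (ht.snd_eEta (by omega)).1)
    (isLinearMap_eq_zero_of_basis ht.isLinearMap_snd_snd (ht.snd_snd_eX hn)
      (fun q hq hqN => ?_) (ht.snd_eEta (by omega)).2))
  all_goals rcases eq_or_lt_of_le hq with rfl | hq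
  · exact hEps1.1
  · exact ht.fst_eEps hn hq hqN
  · exact hEps1.2
  · exact ht.snd_fst_eEps hn hq hqN
  · exact ht.snd_snd_eEps_one hn
  · exact ht.snd_snd_eEps hn hq hqN

end IsG2

/-- the first prolongation `g_1` is one-dimensional, spanned by `u_Y`,
and the second prolongation `g_2` is zero. -/
theorem first_prolongation_span_and_second_zero (n : ℕ) (hn : 6 ≤ n) :
    IsG1 n (uYm n, uY0 n) ∧ (uYm n, uY0 n) ≠ 0 ∧
    (∀ p, IsG1 n p → ∃ c : ℝ, p = c • (uYm n, uY0 n)) ∧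
    (∀ t, IsG2 n t → t = 0) :=
  ⟨isG1_uY hn, uY_ne_zero hn, fun _ hu => hu.eq_smul_uY hn, fun _ ht => ht.eq_zero hn⟩
end
end
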